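/- arXiv:1407.2116 — 6 statements merged into one kernel-verified Lean document; each statement's English description precedes it below -/
import Mathlib

section
/- Consider the differential-algebraic system A(x)ẍ = F(t,x,ẋ) + (∇_ẋφ(t,x,ẋ))ᵀλ, φ(t,x,ẋ) = 0, where A : ℝⁿ → ℝ^{n×n}, F : ℝ×ℝⁿ×ℝⁿ → ℝⁿ and φ : ℝ×ℝⁿ×ℝⁿ → ℝᵐ (m ≤ n) are smooth on a neighborhood of a point (t₀,x₀,ẋ₀). Assume (i) ⟨A(x₀)z, z⟩ > 0 for every nonzero z in the kernel of the partial derivative ∇_ẋφ(t₀,x₀,ẋ₀); (ii) φ(t₀,x₀,ẋ₀) = 0; (iii) rank ∇_ẋφ(t₀,x₀,ẋ₀) = m. Then there exists δ > 0 such that there is a unique pair (x(t), λ(t)), with x twice continuously differentiable and λ continuous on |t−t₀| < δ, satisfying A(x(t))ẍ(t) = F(t,x(t),ẋ(t)) + (∇_ẋφ(t,x(t),ẋ(t)))ᵀλ(t) and φ(t,x(t),ẋ(t)) = 0 for all |t−t₀| < δ, together with the initial conditions x(t₀) = x₀, ẋ(t₀) = ẋ₀. Moreover, along this solution the full-rank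 condition rank ∇_ẋφ(t,x(t),ẋ(t)) = m holds for all |t−t₀| < δ. -/
/-!
Write `G = ∇_ẋφ`. Differentiating the constraint along a solution gives `G ẍ = c(t, x, ẋ)`, so
`(ẍ, λ)` solves the saddle-point system `[[A, -Gᵀ], [G, 0]] (ẍ, λ) = (F, c)`. Positivity of `A` on
`ker G` and full row rank of `G` make this matrix invertible at `(t₀, x₀, ẋ₀)`, hence on an open
set `W`, and invertibility in turn forces `rank G = m` on `W`. Solving for `ẍ` turns the DAE into a
smooth first-order ODE on `W` in the phase variables `(t, x, ẋ)`. Its solution through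
`(t₀, x₀, ẋ₀)` keeps `φ` constant, hence zero, so it solves the DAE. Conversely the jet
`(t, x, ẋ)` of any solution of the DAE solves the ODE as long as it stays in `W`, so uniqueness for
the ODE, propagated along the interval by connectedness, gives uniqueness for the DAE.
-/

open Matrix Metric

/-- The `m × n` Jacobian matrix `∇_ẋφ(t,x,v)` of `φ` with respect to its third
(velocity) argument. -/
noncomputable def velJacobian {n m : ℕ}
    (φ : ℝ → (Fin n → ℝ) → (Fin n → ℝ) → (Fin m → ℝ))
    (t : ℝ) (x v : Fin n → ℝ) : Matrix (Fin m) (Fin n) ℝ :=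
  Matrix.of fun α i => fderiv ℝ (fun w => φ t x w α) v (Pi.single i 1)

open Set Filter Topology
open scoped ContDiff

namespace Matrix

variable {ι κ R : Type*} [Fintype ι] [Fintype κ]

def saddle [Ring R] (A : Matrix ι ι R) (G : Matrix κ ι R) : Matrix (ι ⊕ κ) (ι ⊕ κ) R :=
  fromBlocks A (-Gᵀ) G 0

theorem saddle_mulVec_sumElim_eq_iff [CommRing R] (A : Matrix ι ι R) (G : Matrix κ ι R)
    (a f : ι → R) (μ c : κ → R) :
    saddle A G *ᵥ Sum.elim a μ = Sum.elim f c ↔ A *ᵥ a = f + Gᵀ *ᵥ μ ∧ G *ᵥ a = c := by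
  rw [saddle, fromBlocks_mulVec, Sum.elim_comp_inl, Sum.elim_comp_inr, Sum.elim_eq_iff,
    neg_mulVec, zero_mulVec, add_zero, ← sub_eq_add_neg, sub_eq_iff_eq_add]

theorem isUnit_saddle [DecidableEq ι] [DecidableEq κ] [Field R] [PartialOrder R]
    {A : Matrix ι ι R} {G : Matrix κ ι R}
    (hG : Function.Injective Gᵀ.mulVec)
    (hA : ∀ z, z ≠ 0 → G *ᵥ z = 0 → 0 < z ⬝ᵥ (A *ᵥ z)) : IsUnit (saddle A G) := by
  refine mulVec_injective_iff_isUnit.mp <| (injective_iff_map_eq_zero (mulVecLin _)).mpr ?_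
  intro u hu
  obtain ⟨z, μ, rfl⟩ : ∃ z μ, u = Sum.elim z μ := ⟨u ∘ Sum.inl, u ∘ Sum.inr, by simp⟩
  rw [mulVecLin_apply, ← Sum.elim_zero_zero, saddle_mulVec_sumElim_eq_iff, zero_add] at hu
  obtain ⟨hAz, hGz⟩ := hu
  have hz : z = 0 := by
    by_contra hz
    have := hA z hz hGz
    rw [hAz, dotProduct_mulVec, vecMul_transpose, hGz, zero_dotProduct] at this
    exact lt_irrefl _ this
  subst hz
  have hμ : μ = 0 := hG (by rw [← hAz, mulVec_zero, mulVec_zero])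
  simp [hμ]

theorem transpose_mulVec_injective_of_isUnit_saddle [DecidableEq ι] [DecidableEq κ] [CommRing R]
    {A : Matrix ι ι R} {G : Matrix κ ι R} (h : IsUnit (saddle A G)) :
    Function.Injective Gᵀ.mulVec := by
  refine (injective_iff_map_eq_zero (mulVecLin Gᵀ)).mpr fun μ hμ => ?_
  have : saddle A G *ᵥ Sum.elim 0 μ = 0 := by
    rw [← Sum.elim_zero_zero, saddle_mulVec_sumElim_eq_iff, mulVec_zero, zero_add]
    exact ⟨hμ.symm, mulVec_zero G⟩
  rw [← mulVec_zero (saddle A G)] at this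
  simpa using congr_arg (· ∘ Sum.inr) (mulVec_injective_of_isUnit h this)

theorem rank_eq_card_iff_transpose_mulVec_injective [Field R] (G : Matrix κ ι R) :
    G.rank = Fintype.card κ ↔ Function.Injective Gᵀ.mulVec := by
  rw [mulVec_injective_iff, col_transpose, linearIndependent_iff_card_eq_finrank_span,
    rank_eq_finrank_span_row, eq_comm, Set.finrank]

theorem inv_mulVec_eq_iff [DecidableEq ι] [CommRing R] {M : Matrix ι ι R} (h : IsUnit M.det)
    {r u : ι → R} : M⁻¹ *ᵥ r = u ↔ M *ᵥ u = r := by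
  constructor <;> rintro rfl
  · rw [mulVec_mulVec, mul_nonsing_inv _ h, one_mulVec]
  · rw [mulVec_mulVec, nonsing_inv_mul _ h, one_mulVec]

end Matrix

section AutonomousODE

variable {E : Type*} [NormedAddCommGroup E] [NormedSpace ℝ E] {g : E → E} {W : Set E}

theorem exists_hasDerivAt_mem_ball_of_contDiffOn [CompleteSpace E] (hW : IsOpen W)
    (hg : ContDiffOn ℝ 1 g W) {p₀ : E} (hp₀ : p₀ ∈ W) (t₀ : ℝ) :
    ∃ δ > 0, ∃ y : ℝ → E, y t₀ = p₀ ∧ ∀ t ∈ ball t₀ δ, y t ∈ W ∧ HasDerivAt y (g (y t)) t := by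
  have hg₀ : ContDiffAt ℝ 1 g p₀ := hg.contDiffAt (hW.mem_nhds hp₀)
  obtain ⟨y, hy₀, ε, hε, hy⟩ :=
    hg₀.exists_forall_mem_closedBall_exists_eq_forall_mem_Ioo_hasDerivAt₀ t₀
  have hyW : ∀ᶠ t in 𝓝 t₀, y t ∈ W :=
    (hy t₀ (by simpa using hε)).continuousAt.preimage_mem_nhds (hy₀ ▸ hW.mem_nhds hp₀)
  obtain ⟨δ, hδ, hball⟩ := Metric.mem_nhds_iff.mp hyW
  refine ⟨min δ ε, lt_min hδ hε, y, hy₀, fun t ht =>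
    ⟨hball (ball_subset_ball (min_le_left _ _) ht), hy t ?_⟩⟩
  rw [← Real.ball_eq_Ioo]
  exact ball_subset_ball (min_le_right _ _) ht

theorem eventuallyEq_of_hasDerivAt_of_contDiffOn (hW : IsOpen W) (hg : ContDiffOn ℝ 1 g W)
    {y₁ y₂ : ℝ → E} {t₀ : ℝ} (hy₁ : ∀ᶠ t in 𝓝 t₀, y₁ t ∈ W → HasDerivAt y₁ (g (y₁ t)) t)
    (hy₂ : ∀ᶠ t in 𝓝 t₀, y₂ t ∈ W → HasDerivAt y₂ (g (y₂ t)) t)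
    (hy₁c : ContinuousAt y₁ t₀) (hy₂c : ContinuousAt y₂ t₀) (hW₀ : y₁ t₀ ∈ W)
    (h₀ : y₁ t₀ = y₂ t₀) : y₁ =ᶠ[𝓝 t₀] y₂ := by
  obtain ⟨K, u, hu, hlip⟩ := (hg.contDiffAt (hW.mem_nhds hW₀)).exists_lipschitzOnWith
  have huW : u ∩ W ∈ 𝓝 (y₁ t₀) := inter_mem hu (hW.mem_nhds hW₀)
  have hsol : ∀ {y : ℝ → E}, (∀ᶠ t in 𝓝 t₀, y t ∈ W → HasDerivAt y (g (y t)) t) →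
      ContinuousAt y t₀ → y t₀ = y₁ t₀ → ∀ᶠ t in 𝓝 t₀, HasDerivAt y (g (y t)) t ∧ y t ∈ u ∩ W :=
    fun hy hyc hy₀ => by
      filter_upwards [hy, hyc.preimage_mem_nhds (hy₀ ▸ huW)] with t hyt hmem
      exact ⟨hyt hmem.2, hmem⟩
  exact ODE_solution_unique_of_eventually (v := fun _ => g) (s := fun _ => u ∩ W)
    (.of_forall fun _ => hlip.mono inter_subset_left) (hsol hy₁ hy₁c rfl)
    (hsol hy₂ hy₂c h₀.symm) h₀

theorem eqOn_of_hasDerivAt_of_contDiffOn (hW : IsOpen W) (hg : ContDiffOn ℝ 1 g W)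
    {I : Set ℝ} (hI : IsOpen I) (hIc : IsPreconnected I) {y₁ y₂ : ℝ → E} {t₀ : ℝ}
    (ht₀ : t₀ ∈ I) (hy₁ : ∀ t ∈ I, y₁ t ∈ W ∧ HasDerivAt y₁ (g (y₁ t)) t)
    (hy₂c : ContinuousOn y₂ I) (hy₂ : ∀ t ∈ I, y₂ t ∈ W → HasDerivAt y₂ (g (y₂ t)) t)
    (h₀ : y₁ t₀ = y₂ t₀) : EqOn y₁ y₂ I := by
  have hlocal : ∀ t ∈ I, y₁ t = y₂ t → y₁ =ᶠ[𝓝 t] y₂ := fun t ht heq =>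
    eventuallyEq_of_hasDerivAt_of_contDiffOn hW hg
      (eventually_of_mem (hI.mem_nhds ht) fun τ hτ _ => (hy₁ τ hτ).2)
      (eventually_of_mem (hI.mem_nhds ht) (hy₂ ·))
      (hy₁ t ht).2.continuousAt (hy₂c.continuousAt (hI.mem_nhds ht)) (hy₁ t ht).1 heq
  suffices hsub : I ⊆ {t | y₁ =ᶠ[𝓝 t] y₂} from fun t ht => (hsub ht).eq_of_nhds
  refine hIc.subset_of_closure_inter_subset isOpen_setOfPred_eventually_nhds
    ⟨t₀, ht₀, hlocal t₀ ht₀ h₀⟩ fun t ⟨htcl, ht⟩ => hlocal t ht ?_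
  have hcont : ContinuousAt (fun τ => (y₁ τ, y₂ τ)) t :=
    (hy₁ t ht).2.continuousAt.prodMk (hy₂c.continuousAt (hI.mem_nhds ht))
  have hdiag : (fun τ => (y₁ τ, y₂ τ)) '' {τ | y₁ =ᶠ[𝓝 τ] y₂} ⊆ diagonal E :=
    image_subset_iff.mpr fun τ hτ => hτ.eq_of_nhds
  exact isClosed_diagonal.closure_subset_iff.mpr hdiag (mem_closure_image hcont htcl)

theorem contDiffOn_succ_of_hasDerivAt {s : Set ℝ} (hs : IsOpen s) {y : ℝ → E}
    (hy : ∀ t ∈ s, y t ∈ W ∧ HasDerivAt y (g (y t)) t) :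
    ∀ {k : ℕ}, ContDiffOn ℝ k g W → ContDiffOn ℝ (k + 1) y s
  | k, hg => by
    have hyk : ContDiffOn ℝ k y s := by
      cases k with
      | zero =>
        exact contDiffOn_zero.mpr fun t ht => (hy t ht).2.continuousAt.continuousWithinAt
      | succ j => exact_mod_cast contDiffOn_succ_of_hasDerivAt hs hy (hg.of_succ)
    refine (contDiffOn_succ_iff_deriv_of_isOpen hs).mpr
      ⟨fun t ht => (hy t ht).2.differentiableAt.differentiableWithinAt, by simp, ?_⟩
    exact (hg.comp hyk fun t ht => (hy t ht).1).congr fun t ht => (hy t ht).2.deriv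

end AutonomousODE

section ContDiffMatrix

variable {𝕜 E ι : Type*} [NontriviallyNormedField 𝕜] [NormedAddCommGroup E] [NormedSpace 𝕜 E]
  [Fintype ι] [DecidableEq ι] {M : E → Matrix ι ι 𝕜} {s : Set E} {k : WithTop ℕ∞}

theorem contDiffOn_matrix_det (h : ∀ i j, ContDiffOn 𝕜 k (fun p => M p i j) s) :
    ContDiffOn 𝕜 k (fun p => (M p).det) s := by
  simp only [det_apply']
  exact ContDiffOn.sum fun σ _ => contDiffOn_const.mul (contDiffOn_prod fun i _ => h (σ i) i)

theorem contDiffOn_matrix_inv_apply [CompleteSpace 𝕜]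
    (h : ∀ i j, ContDiffOn 𝕜 k (fun p => M p i j) s) (hdet : ∀ p ∈ s, (M p).det ≠ 0) (i j : ι) :
    ContDiffOn 𝕜 k (fun p => (M p)⁻¹ i j) s := by
  have hadj : ContDiffOn 𝕜 k (fun p => (M p).adjugate i j) s := by
    simp only [adjugate_apply]
    refine contDiffOn_matrix_det fun k' l => ?_
    by_cases hk : k' = j
    · subst hk
      simpa only [updateRow_self] using contDiffOn_const
    · simpa only [updateRow_ne hk] using h k' l
  refine (((contDiffOn_matrix_det h).inv hdet).mul hadj).congr fun p _ => ?_
  simp [inv_def, Ring.inverse_eq_inv', smul_eq_mul]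

end ContDiffMatrix

section ProdDeriv

variable {𝕜 E F : Type*} [NontriviallyNormedField 𝕜] [NormedAddCommGroup E] [NormedSpace 𝕜 E]
  [NormedAddCommGroup F] [NormedSpace 𝕜 F] {y : 𝕜 → E × F} {y' : E × F} {t : 𝕜}

theorem HasDerivAt.fst (h : HasDerivAt y y' t) : HasDerivAt (fun s => (y s).1) y'.1 t :=
  (ContinuousLinearMap.fst 𝕜 E F).hasFDerivAt.comp_hasDerivAt t h

theorem HasDerivAt.snd (h : HasDerivAt y y' t) : HasDerivAt (fun s => (y s).2) y'.2 t :=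
  (ContinuousLinearMap.snd 𝕜 E F).hasFDerivAt.comp_hasDerivAt t h

end ProdDeriv

namespace DAE

variable {n m : ℕ}

abbrev Phase (n : ℕ) := ℝ × (Fin n → ℝ) × (Fin n → ℝ)

noncomputable def uncurry {β : Type*} (f : ℝ → (Fin n → ℝ) → (Fin n → ℝ) → β) (p : Phase n) :
    β :=
  f p.1 p.2.1 p.2.2

noncomputable def jet (x : ℝ → Fin n → ℝ) (t : ℝ) : Phase n := (t, x t, deriv x t)

variable (A : (Fin n → ℝ) → Matrix (Fin n) (Fin n) ℝ)
  (F : ℝ → (Fin n → ℝ) → (Fin n → ℝ) → (Fin n → ℝ))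
  (φ : ℝ → (Fin n → ℝ) → (Fin n → ℝ) → (Fin m → ℝ))

noncomputable def kktMatrix (p : Phase n) : Matrix (Fin n ⊕ Fin m) (Fin n ⊕ Fin m) ℝ :=
  saddle (A p.2.1) (uncurry (velJacobian φ) p)

/-- Differentiating `φ(t, x, ẋ) = 0` in `t` gives `∇_ẋφ ẍ = constraintDrift φ (t, x, ẋ)`. -/
noncomputable def constraintDrift (p : Phase n) : Fin m → ℝ :=
  -fderiv ℝ (uncurry φ) p (1, p.2.2, 0)

noncomputable def kktSolution (p : Phase n) : Fin n ⊕ Fin m → ℝ :=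
  (kktMatrix A φ p)⁻¹ *ᵥ Sum.elim (uncurry F p) (constraintDrift φ p)

noncomputable def accel (p : Phase n) : Fin n → ℝ := kktSolution A F φ p ∘ Sum.inl

noncomputable def multiplier (p : Phase n) : Fin m → ℝ := kktSolution A F φ p ∘ Sum.inr

noncomputable def vectorField (p : Phase n) : Phase n := (1, p.2.2, accel A F φ p)

def regularSet (U : Set (Phase n)) : Set (Phase n) := {p ∈ U | (kktMatrix A φ p).det ≠ 0}

def IsSolution (t₀ : ℝ) (x₀ v₀ : Fin n → ℝ) (s : Set ℝ) (x : ℝ → Fin n → ℝ)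
    (lam : ℝ → Fin m → ℝ) : Prop :=
  ContDiffOn ℝ 2 x s ∧ ContinuousOn lam s ∧
    (∀ t ∈ s, A (x t) *ᵥ deriv (deriv x) t =
        F t (x t) (deriv x t) + (velJacobian φ t (x t) (deriv x t))ᵀ *ᵥ lam t ∧
      φ t (x t) (deriv x t) = 0) ∧
    x t₀ = x₀ ∧ deriv x t₀ = v₀

variable {A F φ} {U : Set (Phase n)}

theorem velJacobian_mulVec {p : Phase n} (hφ : DifferentiableAt ℝ (uncurry φ) p)
    (w : Fin n → ℝ) : uncurry (velJacobian φ) p *ᵥ w = fderiv ℝ (uncurry φ) p (0, 0, w) := by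
  set L := (fderiv ℝ (uncurry φ) p).comp ((0 : (Fin n → ℝ) →L[ℝ] ℝ).prod
    ((0 : (Fin n → ℝ) →L[ℝ] (Fin n → ℝ)).prod (.id ℝ (Fin n → ℝ))))
  have hincl : HasFDerivAt (fun w => ((p.1, p.2.1, id w) : Phase n)) _ p.2.2 :=
    (hasFDerivAt_const p.1 _).prodMk
      ((hasFDerivAt_const p.2.1 _).prodMk (hasFDerivAt_id (𝕜 := ℝ) p.2.2))
  have hL : HasFDerivAt (fun w => φ p.1 p.2.1 w) L p.2.2 :=
    (hφ.hasFDerivAt.comp p.2.2 hincl :)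
  have : uncurry (velJacobian φ) p = LinearMap.toMatrix' L := by
    ext α i
    exact congr($((hasFDerivAt_pi'.mp hL α).fderiv) (Pi.single i 1))
  rw [this, LinearMap.toMatrix'_mulVec]
  rfl

theorem contDiffOn_velJacobian_apply (hU : IsOpen U) (hφ : ContDiffOn ℝ ∞ (uncurry φ) U)
    (α : Fin m) (i : Fin n) : ContDiffOn ℝ ∞ (fun p => uncurry (velJacobian φ) p α i) U := by
  have hfd := contDiffOn_pi.mp ((hφ.fderiv_of_isOpen hU (m := ∞) le_rfl).clm_apply
    (contDiffOn_const (c := (0, 0, Pi.single i 1)))) α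
  refine hfd.congr fun p hp => ?_
  have hdiff := (hφ.contDiffAt (hU.mem_nhds hp)).differentiableAt (by simp)
  simpa using congr_fun (velJacobian_mulVec hdiff (Pi.single i 1)) α

theorem accel_eq_and_multiplier_eq_iff {p : Phase n} (hp : (kktMatrix A φ p).det ≠ 0)
    {a : Fin n → ℝ} {μ : Fin m → ℝ} :
    accel A F φ p = a ∧ multiplier A F φ p = μ ↔
      A p.2.1 *ᵥ a = uncurry F p + (uncurry (velJacobian φ) p)ᵀ *ᵥ μ ∧
        uncurry (velJacobian φ) p *ᵥ a = constraintDrift φ p := by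
  rw [← saddle_mulVec_sumElim_eq_iff, ← kktMatrix,
    ← inv_mulVec_eq_iff (isUnit_iff_ne_zero.mpr hp), ← kktSolution, ← Sum.elim_eq_iff, accel,
    multiplier, Sum.elim_comp_inl_inr]

section Smoothness

variable (hU : IsOpen U) (hA : ContDiffOn ℝ ∞ (fun p : Phase n => fun i j => A p.2.1 i j) U)
  (hF : ContDiffOn ℝ ∞ (uncurry F) U) (hφ : ContDiffOn ℝ ∞ (uncurry φ) U)
include hU hA hφ

theorem contDiffOn_kktMatrix_apply (k l : Fin n ⊕ Fin m) :
    ContDiffOn ℝ ∞ (fun p => kktMatrix A φ p k l) U := by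
  rcases k with i | α <;> rcases l with j | β
  · exact contDiffOn_pi.mp (contDiffOn_pi.mp hA i) j
  · exact (contDiffOn_velJacobian_apply hU hφ β i).neg
  · exact contDiffOn_velJacobian_apply hU hφ α j
  · exact contDiffOn_const

theorem isOpen_regularSet : IsOpen (regularSet A φ U) :=
  (contDiffOn_matrix_det (contDiffOn_kktMatrix_apply hU hA hφ)).continuousOn.isOpen_inter_preimage
    hU isOpen_compl_singleton

include hF in
theorem contDiffOn_kktSolution : ContDiffOn ℝ ∞ (kktSolution A F φ) (regularSet A φ U) := by
  have harg : ContDiff ℝ ∞ fun p : Phase n => ((1 : ℝ), p.2.2, (0 : Fin n → ℝ)) :=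
    contDiff_const.prodMk ((contDiff_snd.comp contDiff_snd).prodMk contDiff_const)
  have hdrift : ContDiffOn ℝ ∞ (constraintDrift φ) U :=
    ((hφ.fderiv_of_isOpen hU (m := ∞) le_rfl).clm_apply harg.contDiffOn).neg
  have hrhs : ∀ l, ContDiffOn ℝ ∞ (fun p => Sum.elim (uncurry F p) (constraintDrift φ p) l)
      (regularSet A φ U) := by
    rintro (i | α)
    · exact (contDiffOn_pi.mp hF i).mono fun _ hp => hp.1
    · exact (contDiffOn_pi.mp hdrift α).mono fun _ hp => hp.1
  have hinv := contDiffOn_matrix_inv_apply (s := regularSet A φ U)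
    (fun k l => (contDiffOn_kktMatrix_apply hU hA hφ k l).mono fun _ hp => hp.1)
    (fun _ hp => hp.2)
  exact contDiffOn_pi.mpr fun k => by
    simpa only [kktSolution, mulVec, dotProduct] using
      ContDiffOn.sum fun l _ => (hinv k l).mul (hrhs l)

include hF in
theorem contDiffOn_vectorField : ContDiffOn ℝ ∞ (vectorField A F φ) (regularSet A φ U) :=
  contDiffOn_const.prodMk ((contDiff_snd.comp contDiff_snd).contDiffOn.prodMk
    (contDiffOn_pi.mpr fun i => contDiffOn_pi.mp (contDiffOn_kktSolution hU hA hF hφ) (.inl i)))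

include hF in
theorem continuousOn_multiplier : ContinuousOn (multiplier A F φ) (regularSet A φ U) :=
  (contDiffOn_pi.mpr fun α =>
    contDiffOn_pi.mp (contDiffOn_kktSolution hU hA hF hφ) (.inr α)).continuousOn

end Smoothness

theorem rank_velJacobian_of_mem_regularSet {p : Phase n} (hp : p ∈ regularSet A φ U) :
    (uncurry (velJacobian φ) p).rank = m := by
  simpa using (rank_eq_card_iff_transpose_mulVec_injective _).mpr
    (transpose_mulVec_injective_of_isUnit_saddle ((isUnit_iff_isUnit_det _).mpr
      (isUnit_iff_ne_zero.mpr hp.2)))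

theorem mem_regularSet {p : Phase n} (hpU : p ∈ U)
    (hpos : ∀ z : Fin n → ℝ, z ≠ 0 → uncurry (velJacobian φ) p *ᵥ z = 0 →
      0 < z ⬝ᵥ (A p.2.1 *ᵥ z))
    (hrank : (uncurry (velJacobian φ) p).rank = m) : p ∈ regularSet A φ U := by
  refine ⟨hpU, (isUnit_iff_ne_zero.mp ((isUnit_iff_isUnit_det _).mp (isUnit_saddle ?_ hpos)))⟩
  exact (rank_eq_card_iff_transpose_mulVec_injective _).mp (by simpa using hrank)

theorem hasDerivAt_uncurry_comp {y : ℝ → Phase n} {t : ℝ} {a : Fin n → ℝ}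
    (hy : HasDerivAt y (1, (y t).2.2, a) t) (hφ : DifferentiableAt ℝ (uncurry φ) (y t)) :
    HasDerivAt (fun s => uncurry φ (y s))
      (uncurry (velJacobian φ) (y t) *ᵥ a - constraintDrift φ (y t)) t := by
  have hsplit : ((1, (y t).2.2, a) : Phase n) = (1, (y t).2.2, 0) + (0, 0, a) := by simp
  have := hφ.hasFDerivAt.comp_hasDerivAt t hy
  rwa [hsplit, map_add, ← velJacobian_mulVec hφ, add_comm, ← sub_neg_eq_add] at this

theorem hasDerivAt_jet {s : Set ℝ} (hs : IsOpen s) {x : ℝ → Fin n → ℝ}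
    (hx : ContDiffOn ℝ 2 x s) {t : ℝ} (ht : t ∈ s) :
    HasDerivAt (jet x) (1, deriv x t, deriv (deriv x) t) t := by
  obtain ⟨hdx, -, hdx'⟩ := (contDiffOn_succ_iff_deriv_of_isOpen (n := 1) hs).mp hx
  have hdd := (hdx'.differentiableOn one_ne_zero).differentiableAt (hs.mem_nhds ht)
  exact (hasDerivAt_id t).prodMk
    ((hdx.differentiableAt (hs.mem_nhds ht)).hasDerivAt.prodMk hdd.hasDerivAt)

theorem IsSolution.hasDerivAt_vectorField {t₀ : ℝ} {x₀ v₀ : Fin n → ℝ} {s : Set ℝ} (hs : IsOpen s)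
    {x : ℝ → Fin n → ℝ} {lam : ℝ → Fin m → ℝ} (hsol : IsSolution A F φ t₀ x₀ v₀ s x lam)
    {t : ℝ} (ht : t ∈ s) (hφ : DifferentiableAt ℝ (uncurry φ) (jet x t))
    (hreg : (kktMatrix A φ (jet x t)).det ≠ 0) :
    HasDerivAt (jet x) (vectorField A F φ (jet x t)) t ∧ lam t = multiplier A F φ (jet x t) := by
  obtain ⟨hx, -, heq, -⟩ := hsol
  have hjet := hasDerivAt_jet hs hx ht
  have hconstr : HasDerivAt (fun τ => uncurry φ (jet x τ)) 0 t :=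
    (hasDerivAt_const t 0).congr_of_eventuallyEq
      (eventually_of_mem (hs.mem_nhds ht) fun τ hτ => (heq τ hτ).2)
  obtain ⟨ha, hμ⟩ := (accel_eq_and_multiplier_eq_iff hreg).mpr
    ⟨(heq t ht).1, sub_eq_zero.mp ((hasDerivAt_uncurry_comp hjet hφ).unique hconstr)⟩
  exact ⟨by rwa [vectorField, ha], hμ.symm⟩

section IntegralCurve

variable {t₀ δ : ℝ} {y : ℝ → Phase n}

theorem eqOn_jet_of_hasDerivAt (hy₀ : (y t₀).1 = t₀)
    (hy : ∀ t ∈ ball t₀ δ, HasDerivAt y (vectorField A F φ (y t)) t) :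
    EqOn (jet fun t => (y t).2.1) y (ball t₀ δ) := by
  intro t ht
  have htime : EqOn (fun t => (y t).1) id (ball t₀ δ) :=
    isOpen_ball.eqOn_of_deriv_eq (convex_ball t₀ δ).isPreconnected
      (fun τ hτ => (hy τ hτ).fst.differentiableAt.differentiableWithinAt) differentiableOn_id
      (fun τ hτ => by rw [(hy τ hτ).fst.deriv, deriv_id]; rfl)
      (mem_ball_self (pos_of_mem_ball ht)) hy₀
  exact Prod.ext (htime ht).symm (Prod.ext rfl (hy t ht).snd.fst.deriv)

theorem uncurry_eq_zero_of_hasDerivAt (hφ : ∀ t ∈ ball t₀ δ, DifferentiableAt ℝ (uncurry φ) (y t))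
    (hy : ∀ t ∈ ball t₀ δ, (kktMatrix A φ (y t)).det ≠ 0 ∧
      HasDerivAt y (vectorField A F φ (y t)) t)
    (hy₀ : uncurry φ (y t₀) = 0) : ∀ t ∈ ball t₀ δ, uncurry φ (y t) = 0 := by
  have hderiv : ∀ t ∈ ball t₀ δ, HasDerivAt (fun s => uncurry φ (y s)) 0 t := fun t ht => by
    simpa [((accel_eq_and_multiplier_eq_iff (hy t ht).1).mp ⟨rfl, rfl⟩).2] using
      hasDerivAt_uncurry_comp (hy t ht).2 (hφ t ht)
  intro t ht
  rw [← hy₀]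
  exact isOpen_ball.is_const_of_deriv_eq_zero (convex_ball t₀ δ).isPreconnected
    (fun τ hτ => (hderiv τ hτ).differentiableAt.differentiableWithinAt)
    (fun τ hτ => (hderiv τ hτ).deriv) ht (mem_ball_self (pos_of_mem_ball ht))

end IntegralCurve

section Solutions

variable (hU : IsOpen U) (hA : ContDiffOn ℝ ∞ (fun p : Phase n => fun i j => A p.2.1 i j) U)
  (hF : ContDiffOn ℝ ∞ (uncurry F) U) (hφ : ContDiffOn ℝ ∞ (uncurry φ) U)
  {t₀ δ : ℝ} {x₀ v₀ : Fin n → ℝ} {y : ℝ → Phase n} (hy₀ : y t₀ = (t₀, x₀, v₀))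
  (hy : ∀ t ∈ ball t₀ δ, y t ∈ regularSet A φ U ∧ HasDerivAt y (vectorField A F φ (y t)) t)
include hU hA hF hφ hy₀ hy

theorem isSolution_of_hasDerivAt (hinit : φ t₀ x₀ v₀ = 0) (hδ : 0 < δ) :
    IsSolution A F φ t₀ x₀ v₀ (ball t₀ δ) (fun t => (y t).2.1) (multiplier A F φ ∘ y) := by
  have hjet := eqOn_jet_of_hasDerivAt (by rw [hy₀]) fun t ht => (hy t ht).2
  have hconstr := uncurry_eq_zero_of_hasDerivAt
    (fun t ht => (hφ.contDiffAt (hU.mem_nhds (hy t ht).1.1)).differentiableAt (by simp))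
    (fun t ht => ⟨(hy t ht).1.2, (hy t ht).2⟩) (by rw [hy₀]; exact hinit)
  have hy2 : ContDiffOn ℝ 2 y (ball t₀ δ) := contDiffOn_succ_of_hasDerivAt isOpen_ball hy
    (k := 1) ((contDiffOn_vectorField hU hA hF hφ).of_le (by simp))
  refine ⟨(contDiff_fst.comp contDiff_snd).comp_contDiffOn hy2,
    (continuousOn_multiplier hU hA hF hφ).comp hy2.continuousOn fun t ht => (hy t ht).1,
    fun t ht => ⟨?_, ?_⟩, congrArg (·.2.1) hy₀,
    congrArg (·.2.2) ((hjet (mem_ball_self hδ)).trans hy₀)⟩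
  · have hacc : HasDerivAt (deriv fun t => (y t).2.1) (accel A F φ (y t)) t :=
      ((hy t ht).2.congr_of_eventuallyEq
        (eventually_of_mem (isOpen_ball.mem_nhds ht) hjet)).snd.snd
    have := ((accel_eq_and_multiplier_eq_iff (F := F) (hy t ht).1.2).mp ⟨rfl, rfl⟩).1
    rw [← hjet ht] at this
    rwa [hacc.deriv, Function.comp_apply, ← hjet ht]
  · have := hconstr t ht
    rw [← hjet ht] at this
    exact this

theorem IsSolution.eq_of_hasDerivAt {x : ℝ → Fin n → ℝ} {lam : ℝ → Fin m → ℝ}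
    (hsol : IsSolution A F φ t₀ x₀ v₀ (ball t₀ δ) x lam) :
    ∀ t ∈ ball t₀ δ, jet x t = y t ∧ lam t = multiplier A F φ (y t) := by
  have hloc : ∀ t ∈ ball t₀ δ, jet x t ∈ regularSet A φ U →
      HasDerivAt (jet x) (vectorField A F φ (jet x t)) t ∧ lam t = multiplier A F φ (jet x t) :=
    fun t ht hreg => hsol.hasDerivAt_vectorField isOpen_ball ht
      ((hφ.contDiffAt (hU.mem_nhds hreg.1)).differentiableAt (by simp)) hreg.2
  intro t ht
  have heq : EqOn y (jet x) (ball t₀ δ) :=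
    eqOn_of_hasDerivAt_of_contDiffOn (isOpen_regularSet hU hA hφ)
      ((contDiffOn_vectorField hU hA hF hφ).of_le (by simp)) isOpen_ball
      (convex_ball t₀ δ).isPreconnected (mem_ball_self (pos_of_mem_ball ht)) hy
      (fun τ hτ => (hasDerivAt_jet isOpen_ball hsol.1 hτ).continuousAt.continuousWithinAt)
      (fun τ hτ hreg => (hloc τ hτ hreg).1) (by rw [hy₀, jet, hsol.2.2.2.1, hsol.2.2.2.2])
  rw [heq ht]
  exact ⟨rfl, (hloc t ht (heq ht ▸ (hy t ht).1)).2⟩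

end Solutions

end DAE

theorem dae_local_existence_uniqueness_general {n m : ℕ}
    (t₀ : ℝ) (x₀ v₀ : Fin n → ℝ)
    (A : (Fin n → ℝ) → Matrix (Fin n) (Fin n) ℝ)
    (F : ℝ → (Fin n → ℝ) → (Fin n → ℝ) → (Fin n → ℝ))
    (φ : ℝ → (Fin n → ℝ) → (Fin n → ℝ) → (Fin m → ℝ))
    (U : Set (ℝ × (Fin n → ℝ) × (Fin n → ℝ))) (hU : IsOpen U)
    (hmem : (t₀, x₀, v₀) ∈ U)
    (hA : ContDiffOn ℝ (⊤ : ℕ∞)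
      (fun p : ℝ × (Fin n → ℝ) × (Fin n → ℝ) => fun i j => A p.2.1 i j) U)
    (hF : ContDiffOn ℝ (⊤ : ℕ∞)
      (fun p : ℝ × (Fin n → ℝ) × (Fin n → ℝ) => F p.1 p.2.1 p.2.2) U)
    (hφ : ContDiffOn ℝ (⊤ : ℕ∞)
      (fun p : ℝ × (Fin n → ℝ) × (Fin n → ℝ) => φ p.1 p.2.1 p.2.2) U)
    (hpos : ∀ z : Fin n → ℝ, z ≠ 0 → velJacobian φ t₀ x₀ v₀ *ᵥ z = 0 →
      0 < z ⬝ᵥ (A x₀ *ᵥ z))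
    (hinit : φ t₀ x₀ v₀ = 0)
    (hrank : (velJacobian φ t₀ x₀ v₀).rank = m) :
    ∃ δ > (0 : ℝ), ∃ (x : ℝ → Fin n → ℝ) (lam : ℝ → Fin m → ℝ),
      (ContDiffOn ℝ 2 x (ball t₀ δ) ∧ ContinuousOn lam (ball t₀ δ) ∧
        (∀ t ∈ ball t₀ δ,
          A (x t) *ᵥ deriv (deriv x) t =
            F t (x t) (deriv x t) + (velJacobian φ t (x t) (deriv x t))ᵀ *ᵥ lam t ∧
          φ t (x t) (deriv x t) = 0) ∧
        x t₀ = x₀ ∧ deriv x t₀ = v₀) ∧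
      (∀ t ∈ ball t₀ δ, (velJacobian φ t (x t) (deriv x t)).rank = m) ∧
      (∀ (x' : ℝ → Fin n → ℝ) (lam' : ℝ → Fin m → ℝ),
        (ContDiffOn ℝ 2 x' (ball t₀ δ) ∧ ContinuousOn lam' (ball t₀ δ) ∧
          (∀ t ∈ ball t₀ δ,
            A (x' t) *ᵥ deriv (deriv x') t =
              F t (x' t) (deriv x' t) + (velJacobian φ t (x' t) (deriv x' t))ᵀ *ᵥ lam' t ∧
            φ t (x' t) (deriv x' t) = 0) ∧
          x' t₀ = x₀ ∧ deriv x' t₀ = v₀) →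
        ∀ t ∈ ball t₀ δ, x' t = x t ∧ lam' t = lam t) := by
  obtain ⟨δ, hδ, y, hy₀, hy⟩ := exists_hasDerivAt_mem_ball_of_contDiffOn
    (DAE.isOpen_regularSet hU hA hφ) ((DAE.contDiffOn_vectorField hU hA hF hφ).of_le (by simp))
    (DAE.mem_regularSet (φ := φ) hmem hpos hrank) t₀
  have hjet := DAE.eqOn_jet_of_hasDerivAt (by rw [hy₀]) fun t ht => (hy t ht).2
  refine ⟨δ, hδ, _, _, DAE.isSolution_of_hasDerivAt hU hA hF hφ hy₀ hy hinit hδ,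
    fun t ht => ?_, fun x' lam' hsol t ht => ?_⟩
  · have := DAE.rank_velJacobian_of_mem_regularSet (hy t ht).1
    rw [← hjet ht] at this
    exact this
  · obtain ⟨hx', hlam'⟩ := DAE.IsSolution.eq_of_hasDerivAt hU hA hF hφ hy₀ hy hsol t ht
    exact ⟨congrArg (·.2.1) hx', hlam'⟩

/-- Local existence and uniqueness for the differential-algebraic system
`A(x)ẍ = F(t,x,ẋ) + (∇_ẋφ(t,x,ẋ))ᵀλ`, `φ(t,x,ẋ) = 0`, under positive definiteness of
`A(x₀)` on `ker ∇_ẋφ(t₀,x₀,ẋ₀)`, admissibility of the initial data, and the full rank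
condition on `∇_ẋφ(t₀,x₀,ẋ₀)`; along the solution the full-rank condition persists. -/
theorem dae_local_existence_uniqueness {n m : ℕ} (hmn : m ≤ n)
    (t₀ : ℝ) (x₀ v₀ : Fin n → ℝ)
    (A : (Fin n → ℝ) → Matrix (Fin n) (Fin n) ℝ)
    (F : ℝ → (Fin n → ℝ) → (Fin n → ℝ) → (Fin n → ℝ))
    (φ : ℝ → (Fin n → ℝ) → (Fin n → ℝ) → (Fin m → ℝ))
    (U : Set (ℝ × (Fin n → ℝ) × (Fin n → ℝ))) (hU : IsOpen U)
    (hmem : (t₀, x₀, v₀) ∈ U)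
    (hA : ContDiffOn ℝ (⊤ : ℕ∞)
      (fun p : ℝ × (Fin n → ℝ) × (Fin n → ℝ) => fun i j => A p.2.1 i j) U)
    (hF : ContDiffOn ℝ (⊤ : ℕ∞)
      (fun p : ℝ × (Fin n → ℝ) × (Fin n → ℝ) => F p.1 p.2.1 p.2.2) U)
    (hφ : ContDiffOn ℝ (⊤ : ℕ∞)
      (fun p : ℝ × (Fin n → ℝ) × (Fin n → ℝ) => φ p.1 p.2.1 p.2.2) U)
    (hpos : ∀ z : Fin n → ℝ, z ≠ 0 → velJacobian φ t₀ x₀ v₀ *ᵥ z = 0 →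
      0 < z ⬝ᵥ (A x₀ *ᵥ z))
    (hinit : φ t₀ x₀ v₀ = 0)
    (hrank : (velJacobian φ t₀ x₀ v₀).rank = m) :
    ∃ δ > (0 : ℝ), ∃ (x : ℝ → Fin n → ℝ) (lam : ℝ → Fin m → ℝ),
      (ContDiffOn ℝ 2 x (ball t₀ δ) ∧ ContinuousOn lam (ball t₀ δ) ∧
        (∀ t ∈ ball t₀ δ,
          A (x t) *ᵥ deriv (deriv x) t =
            F t (x t) (deriv x t) + (velJacobian φ t (x t) (deriv x t))ᵀ *ᵥ lam t ∧
          φ t (x t) (deriv x t) = 0) ∧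
        x t₀ = x₀ ∧ deriv x t₀ = v₀) ∧
      (∀ t ∈ ball t₀ δ, (velJacobian φ t (x t) (deriv x t)).rank = m) ∧
      (∀ (x' : ℝ → Fin n → ℝ) (lam' : ℝ → Fin m → ℝ),
        (ContDiffOn ℝ 2 x' (ball t₀ δ) ∧ ContinuousOn lam' (ball t₀ δ) ∧
          (∀ t ∈ ball t₀ δ,
            A (x' t) *ᵥ deriv (deriv x') t =
              F t (x' t) (deriv x' t) + (velJacobian φ t (x' t) (deriv x' t))ᵀ *ᵥ lam' t ∧
            φ t (x' t) (deriv x' t) = 0) ∧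
          x' t₀ = x₀ ∧ deriv x' t₀ = v₀) →
        ∀ t ∈ ball t₀ δ, x' t = x t ∧ lam' t = lam t) :=
  dae_local_existence_uniqueness_general t₀ x₀ v₀ A F φ U hU hmem hA hF hφ hpos hinit hrank
end

section
/- Fix n ≥ 1 and 1 ≤ m ≤ n. Let M be a symmetric positive-definite n×n real matrix, V : ℝⁿ → ℝ smooth, and μ : ℝⁿ → ℝ^{m×n} smooth with rank μ(q) = m for every q ∈ ℝⁿ. Let (q₀, v₀) ∈ ℝⁿ×ℝⁿ satisfy the constraint μ(q₀)v₀ = 0. Then there exists δ > 0 such that there is a unique pair (q(t), λ(t)), with q twice continuously differentiable and λ continuous on |t−t₀| < δ, satisfying M q̈(t) = −∇V(q(t)) + μ(q(t))ᵀλ(t) and μ(q(t)) q̇(t) = 0 for all |t−t₀| < δ, with q(t₀) = q₀ and q̇(t₀) = v₀. -/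
/-!
Differentiating the constraint along a motion gives `μ(q) q̈ = -(Dμ(q) q̇) q̇`. Together with
`M q̈ = -∇V(q) + μ(q)ᵀ λ` this is a linear saddle-point system for `(q̈, λ)` whose Schur complement
`μ(q) M⁻¹ μ(q)ᵀ` is positive definite because `μ(q)` has full row rank. Solving it writes `λ` and
`q̈` as smooth functions of `(q, q̇)`, so the DAE reduces to a `C¹` ODE on phase space.
Picard–Lindelöf gives a local solution of that ODE, along which `μ(q) q̇` has zero derivative and
therefore stays `0`. Conversely every solution of the DAE solves the reduced ODE, so uniqueness
for locally Lipschitz ODEs on the connected interval `ball t₀ δ` determines `q`, and then `λ`.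
-/

open Matrix Metric

/-- Gradient of a potential `V : ℝⁿ → ℝ`. -/
noncomputable def gradV {n : ℕ} (V : (Fin n → ℝ) → ℝ) (q : Fin n → ℝ) : Fin n → ℝ :=
  fun i => fderiv ℝ V q (Pi.single i 1)

open Set Filter Topology

section

variable {𝕜 X : Type*} [NontriviallyNormedField 𝕜] [NormedAddCommGroup X] [NormedSpace 𝕜 X]
  {ι κ ν : Type*} [Fintype ι] [Fintype κ] [Fintype ν] {k : WithTop ℕ∞}

theorem ContDiff.matrix_mulVec {A : X → Matrix ι κ 𝕜} {v : X → κ → 𝕜}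
    (hA : ContDiff 𝕜 k fun x i j => A x i j) (hv : ContDiff 𝕜 k v) :
    ContDiff 𝕜 k fun x => A x *ᵥ v x := by
  rw [contDiff_pi] at hv ⊢
  intro i
  have hA : ∀ j, ContDiff 𝕜 k fun x => A x i j :=
    fun j => contDiff_pi.mp (contDiff_pi.mp hA i) j
  simp only [mulVec, dotProduct]
  fun_prop

theorem ContDiff.matrix_mulVec_const {v : X → κ → 𝕜} (hv : ContDiff 𝕜 k v) (A : Matrix ι κ 𝕜) :
    ContDiff 𝕜 k fun x => A *ᵥ v x :=
  ContDiff.matrix_mulVec (A := fun _ => A) contDiff_const hv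

theorem ContDiff.matrix_mul {A : X → Matrix ι κ 𝕜} {B : X → Matrix κ ν 𝕜}
    (hA : ContDiff 𝕜 k fun x i j => A x i j) (hB : ContDiff 𝕜 k fun x i j => B x i j) :
    ContDiff 𝕜 k fun x i j => (A x * B x) i j := by
  simp only [contDiff_pi] at hA hB ⊢
  intro i j
  simp only [mul_apply]
  fun_prop

theorem ContDiff.matrix_transpose {A : X → Matrix ι κ 𝕜}
    (hA : ContDiff 𝕜 k fun x i j => A x i j) :
    ContDiff 𝕜 k fun x i j => (A x)ᵀ i j := by
  simp only [contDiff_pi] at hA ⊢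
  exact fun i j => hA j i

theorem ContDiff.matrix_det [DecidableEq ι] {A : X → Matrix ι ι 𝕜}
    (hA : ContDiff 𝕜 k fun x i j => A x i j) :
    ContDiff 𝕜 k fun x => (A x).det := by
  simp only [contDiff_pi] at hA
  simp only [det_apply]
  fun_prop

theorem ContDiff.matrix_inv [DecidableEq ι] {A : X → Matrix ι ι 𝕜}
    (hA : ContDiff 𝕜 k fun x i j => A x i j) (hdet : ∀ x, IsUnit (A x).det) :
    ContDiff 𝕜 k fun x i j => (A x)⁻¹ i j := by
  have hadj : ContDiff 𝕜 k fun x i j => (A x).adjugate i j := by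
    refine contDiff_pi.mpr fun i => contDiff_pi.mpr fun j => ?_
    simp only [adjugate_apply]
    refine ContDiff.matrix_det (contDiff_pi.mpr fun a => contDiff_pi.mpr fun b => ?_)
    simp only [updateRow_apply]
    split_ifs
    · exact contDiff_const
    · exact contDiff_pi.mp (contDiff_pi.mp hA a) b
  have hinvdet : ContDiff 𝕜 k fun x => ((A x).det)⁻¹ :=
    hA.matrix_det.inv fun x => (hdet x).ne_zero
  simp only [inv_def, Ring.inverse_eq_inv', Matrix.smul_apply, smul_eq_mul]
  simp only [contDiff_pi] at hadj ⊢
  intro i j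
  exact hinvdet.mul (hadj i j)

end

theorem HasDerivAt.matrix_mulVec {𝕜 ι κ : Type*} [NontriviallyNormedField 𝕜] [Fintype κ]
    {A : 𝕜 → Matrix ι κ 𝕜} {A' : Matrix ι κ 𝕜} {v : 𝕜 → κ → 𝕜} {v' : κ → 𝕜} {t : 𝕜}
    (hA : HasDerivAt (fun s i j => A s i j) A' t) (hv : HasDerivAt v v' t) :
    HasDerivAt (fun s => A s *ᵥ v s) (A' *ᵥ v t + A t *ᵥ v') t := by
  rw [hasDerivAt_pi]
  intro i
  simp only [mulVec, dotProduct, Pi.add_apply, ← Finset.sum_add_distrib]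
  exact HasDerivAt.fun_sum fun j _ =>
    (hasDerivAt_pi.mp (hasDerivAt_pi.mp hA i) j).mul (hasDerivAt_pi.mp hv j)

namespace Matrix

variable {ι κ : Type*} [Fintype ι] [Fintype κ]

theorem vecMul_injective_of_rank_eq_card {K : Type*} [Field K] {A : Matrix ι κ K}
    (h : A.rank = Fintype.card ι) : Function.Injective A.vecMul := by
  have hrank := LinearMap.finrank_range_add_finrank_ker Aᵀ.mulVecLin
  rw [← Matrix.rank, rank_transpose, h, Module.finrank_fintype_fun_eq_card] at hrank
  have hker : LinearMap.ker Aᵀ.mulVecLin = ⊥ := Submodule.finrank_eq_zero.mp (by omega)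
  rw [mulVecLin_transpose] at hker
  exact LinearMap.ker_eq_bot.mp hker

theorem PosDef.mul_mul_transpose_of_rank_eq_card {M : Matrix κ κ ℝ} (hM : M.PosDef)
    {A : Matrix ι κ ℝ} (h : A.rank = Fintype.card ι) : (A * M * Aᵀ).PosDef := by
  simpa using hM.mul_mul_conjTranspose_same (vecMul_injective_of_rank_eq_card h)

variable [DecidableEq ι] [DecidableEq κ]

theorem saddlePoint_solution_iff {K : Type*} [Field K] {M : Matrix κ κ K} {A : Matrix ι κ K}
    (hM : IsUnit M.det) (hS : IsUnit (A * M⁻¹ * Aᵀ).det) {f a : κ → K} {c l : ι → K} :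
    M *ᵥ a = f + Aᵀ *ᵥ l ∧ A *ᵥ a = c ↔
      l = (A * M⁻¹ * Aᵀ)⁻¹ *ᵥ (c - A *ᵥ (M⁻¹ *ᵥ f)) ∧ a = M⁻¹ *ᵥ (f + Aᵀ *ᵥ l) := by
  have hA : A *ᵥ (M⁻¹ *ᵥ (f + Aᵀ *ᵥ l)) = A *ᵥ (M⁻¹ *ᵥ f) + (A * M⁻¹ * Aᵀ) *ᵥ l := by
    simp only [mulVec_add, mulVec_mulVec, Matrix.mul_assoc]
  have hMa : M *ᵥ a = f + Aᵀ *ᵥ l ↔ a = M⁻¹ *ᵥ (f + Aᵀ *ᵥ l) := by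
    constructor
    · rintro h; rw [← h, mulVec_mulVec, nonsing_inv_mul _ hM, one_mulVec]
    · rintro rfl; rw [mulVec_mulVec, mul_nonsing_inv _ hM, one_mulVec]
  have hl : (A * M⁻¹ * Aᵀ) *ᵥ l = c - A *ᵥ (M⁻¹ *ᵥ f) ↔
      l = (A * M⁻¹ * Aᵀ)⁻¹ *ᵥ (c - A *ᵥ (M⁻¹ *ᵥ f)) := by
    constructor
    · rintro h; rw [← h, mulVec_mulVec, nonsing_inv_mul _ hS, one_mulVec]
    · rintro h; rw [h, mulVec_mulVec, mul_nonsing_inv _ hS, one_mulVec]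
  rw [hMa, ← hl]
  constructor
  · rintro ⟨rfl, hc⟩
    exact ⟨by rw [← hc, hA]; abel, rfl⟩
  · rintro ⟨hc, rfl⟩
    exact ⟨rfl, by rw [hA, hc]; abel⟩

end Matrix

theorem ODE_solution_eqOn_of_locallyLipschitz {E : Type*} [NormedAddCommGroup E]
    [NormedSpace ℝ E] {F : E → E} (hF : LocallyLipschitz F) {s : Set ℝ} (hs : IsOpen s)
    (hs' : IsPreconnected s) {f g : ℝ → E} (hf : ∀ t ∈ s, HasDerivAt f (F (f t)) t)
    (hg : ∀ t ∈ s, HasDerivAt g (F (g t)) t) {t₀ : ℝ} (ht₀ : t₀ ∈ s) (heq : f t₀ = g t₀) :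
    EqOn f g s := by
  have hlocal : ∀ t ∈ s, f t = g t → f =ᶠ[𝓝 t] g := by
    intro t ht hfg
    obtain ⟨K, U, hU, hlip⟩ := hF (f t)
    have hs_nhds : ∀ᶠ τ in 𝓝 t, τ ∈ s := hs.mem_nhds ht
    refine ODE_solution_unique_of_eventually (v := fun _ => F) (s := fun _ => U)
      (.of_forall fun _ => hlip) ?_ ?_ hfg
    · exact (hs_nhds.mono hf).and ((hf t ht).continuousAt.preimage_mem_nhds hU)
    · exact (hs_nhds.mono hg).and ((hg t ht).continuousAt.preimage_mem_nhds (hfg ▸ hU))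
  have hsub : s ⊆ {t | f =ᶠ[𝓝 t] g} := by
    refine hs'.subset_of_closure_inter_subset isOpen_setOfPred_eventually_nhds
      ⟨t₀, ht₀, hlocal t₀ ht₀ heq⟩ ?_
    rintro t ⟨htu, hts⟩
    refine hlocal t hts (tendsto_nhds_unique_of_frequently_eq (hf t hts).continuousAt
      (hg t hts).continuousAt ?_)
    exact (mem_closure_iff_frequently.mp htu).mono fun τ hτ => hτ.eq_of_nhds
  exact fun t ht => (hsub ht).eq_of_nhds

theorem contDiffOn_succ_of_hasDerivAt_s1 {E : Type*} [NormedAddCommGroup E] [NormedSpace ℝ E]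
    {F : E → E} {k : ℕ} (hF : ContDiff ℝ k F) {s : Set ℝ} (hs : IsOpen s) {x : ℝ → E}
    (hx : ∀ t ∈ s, HasDerivAt x (F (x t)) t) : ContDiffOn ℝ (k + 1) x s := by
  have hdiff : DifferentiableOn ℝ x s :=
    fun t ht => (hx t ht).differentiableAt.differentiableWithinAt
  have hderiv : EqOn (deriv x) (F ∘ x) s := fun t ht => (hx t ht).deriv
  induction k with
  | zero =>
    rw [contDiffOn_succ_iff_deriv_of_isOpen hs]
    refine ⟨hdiff, by simp, ?_⟩
    exact contDiffOn_zero.mpr ((hF.continuous.comp_continuousOn hdiff.continuousOn).congr hderiv)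
  | succ k ih =>
    rw [contDiffOn_succ_iff_deriv_of_isOpen hs]
    refine ⟨hdiff, by simp, ?_⟩
    exact (hF.comp_contDiffOn (ih (hF.of_le (by norm_cast; omega)))).congr hderiv

namespace SimpleMechanicalSystem

noncomputable section

variable {n m : ℕ} (M : Matrix (Fin n) (Fin n) ℝ) (V : (Fin n → ℝ) → ℝ)
  (μ : (Fin n → ℝ) → Matrix (Fin m) (Fin n) ℝ)

def constraintGram (q : Fin n → ℝ) : Matrix (Fin m) (Fin m) ℝ := μ q * M⁻¹ * (μ q)ᵀ

def constraintDrift (q v : Fin n → ℝ) : Fin m → ℝ :=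
  of (fderiv ℝ (fun q α i => μ q α i) q v) *ᵥ v

def multiplier (q v : Fin n → ℝ) : Fin m → ℝ :=
  (constraintGram M μ q)⁻¹ *ᵥ (-constraintDrift μ q v - μ q *ᵥ (M⁻¹ *ᵥ -gradV V q))

def acceleration (q v : Fin n → ℝ) : Fin n → ℝ :=
  M⁻¹ *ᵥ (-gradV V q + (μ q)ᵀ *ᵥ multiplier M V μ q v)

def vectorField (x : (Fin n → ℝ) × (Fin n → ℝ)) : (Fin n → ℝ) × (Fin n → ℝ) :=
  (x.2, acceleration M V μ x.1 x.2)

def IsSolution (s : Set ℝ) (t₀ : ℝ) (q₀ v₀ : Fin n → ℝ) (q : ℝ → Fin n → ℝ)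
    (lam : ℝ → Fin m → ℝ) : Prop :=
  ContDiffOn ℝ 2 q s ∧ ContinuousOn lam s ∧
    (∀ t ∈ s, M *ᵥ deriv (deriv q) t = -gradV V (q t) + (μ (q t))ᵀ *ᵥ lam t ∧
      μ (q t) *ᵥ deriv q t = 0) ∧
    q t₀ = q₀ ∧ deriv q t₀ = v₀

theorem isUnit_det_constraintGram (hM : M.PosDef) (hrank : ∀ q, (μ q).rank = m)
    (q : Fin n → ℝ) : IsUnit (constraintGram M μ q).det :=
  (isUnit_iff_isUnit_det _).mp
    (hM.inv.mul_mul_transpose_of_rank_eq_card (by rw [hrank, Fintype.card_fin])).isUnit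

variable {M V μ}

theorem dynamics_iff {q v a : Fin n → ℝ} {l : Fin m → ℝ} (hM : IsUnit M.det)
    (hS : IsUnit (constraintGram M μ q).det) :
    M *ᵥ a = -gradV V q + (μ q)ᵀ *ᵥ l ∧ μ q *ᵥ a = -constraintDrift μ q v ↔
      l = multiplier M V μ q v ∧ a = acceleration M V μ q v := by
  rw [saddlePoint_solution_iff hM hS]
  exact and_congr_right fun hl => by rw [hl]; rfl

theorem acceleration_spec {q v : Fin n → ℝ} (hM : IsUnit M.det)
    (hS : IsUnit (constraintGram M μ q).det) :
    M *ᵥ acceleration M V μ q v = -gradV V q + (μ q)ᵀ *ᵥ multiplier M V μ q v ∧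
      μ q *ᵥ acceleration M V μ q v = -constraintDrift μ q v :=
  (dynamics_iff hM hS).mpr ⟨rfl, rfl⟩

theorem hasDerivAt_constraint (hμ : Differentiable ℝ fun q α i => μ q α i)
    {y z : ℝ → Fin n → ℝ} {a : Fin n → ℝ} {t : ℝ} (hy : HasDerivAt y (z t) t)
    (hz : HasDerivAt z a t) :
    HasDerivAt (fun s => μ (y s) *ᵥ z s) (constraintDrift μ (y t) (z t) + μ (y t) *ᵥ a) t :=
  ((hμ (y t)).hasFDerivAt.comp_hasDerivAt t hy).matrix_mulVec hz

variable {k : WithTop ℕ∞}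

theorem contDiff_gradV (hV : ContDiff ℝ (k + 1) V) : ContDiff ℝ k (gradV V) :=
  contDiff_pi.mpr fun _ => (hV.fderiv_right le_rfl).clm_apply contDiff_const

theorem contDiff_constraintDrift (hμ : ContDiff ℝ (k + 1) fun q α i => μ q α i) :
    ContDiff ℝ k fun x : (Fin n → ℝ) × (Fin n → ℝ) => constraintDrift μ x.1 x.2 :=
  (((hμ.fderiv_right le_rfl).comp contDiff_fst).clm_apply contDiff_snd).matrix_mulVec contDiff_snd

theorem contDiff_multiplier (hV : ContDiff ℝ (k + 1) V)
    (hμ : ContDiff ℝ (k + 1) fun q α i => μ q α i)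
    (hS : ∀ q, IsUnit (constraintGram M μ q).det) :
    ContDiff ℝ k fun x : (Fin n → ℝ) × (Fin n → ℝ) => multiplier M V μ x.1 x.2 := by
  have hμk : ContDiff ℝ k fun q α i => μ q α i := hμ.of_le le_self_add
  have hgram : ContDiff ℝ k fun q i j => constraintGram M μ q i j :=
    (hμk.matrix_mul contDiff_const).matrix_mul hμk.matrix_transpose
  refine ((hgram.matrix_inv hS).comp contDiff_fst).matrix_mulVec
    ((contDiff_constraintDrift hμ).neg.sub ((hμk.comp contDiff_fst).matrix_mulVec ?_))
  exact ((contDiff_gradV hV).neg.matrix_mulVec_const M⁻¹).comp contDiff_fst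

theorem contDiff_vectorField (hV : ContDiff ℝ (k + 1) V)
    (hμ : ContDiff ℝ (k + 1) fun q α i => μ q α i)
    (hS : ∀ q, IsUnit (constraintGram M μ q).det) : ContDiff ℝ k (vectorField M V μ) := by
  have hμk : ContDiff ℝ k fun q α i => μ q α i := hμ.of_le le_self_add
  refine contDiff_snd.prodMk (ContDiff.matrix_mulVec_const ?_ M⁻¹)
  exact ((contDiff_gradV hV).comp contDiff_fst).neg.add
    ((hμk.matrix_transpose.comp contDiff_fst).matrix_mulVec (contDiff_multiplier hV hμ hS))

theorem isSolution_of_hasDerivAt_vectorField (hM : IsUnit M.det)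
    (hS : ∀ q, IsUnit (constraintGram M μ q).det) (hV : ContDiff ℝ 2 V)
    (hμ : ContDiff ℝ 2 fun q α i => μ q α i) {s : Set ℝ} (hs : IsOpen s)
    (hs' : IsPreconnected s) {t₀ : ℝ} (ht₀ : t₀ ∈ s) {q₀ v₀ : Fin n → ℝ}
    (hcons : μ q₀ *ᵥ v₀ = 0) {x : ℝ → (Fin n → ℝ) × (Fin n → ℝ)}
    (hx : ∀ t ∈ s, HasDerivAt x (vectorField M V μ (x t)) t) (hx₀ : x t₀ = (q₀, v₀)) :
    IsSolution M V μ s t₀ q₀ v₀ (fun t => (x t).1) (fun t => multiplier M V μ (x t).1 (x t).2) := by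
  have hq : ∀ t ∈ s, HasDerivAt (fun t => (x t).1) (x t).2 t :=
    fun t ht => (ContinuousLinearMap.fst ℝ (Fin n → ℝ) (Fin n → ℝ)).hasFDerivAt.comp_hasDerivAt t
      (hx t ht)
  have hv : ∀ t ∈ s, HasDerivAt (fun t => (x t).2) (acceleration M V μ (x t).1 (x t).2) t :=
    fun t ht => (ContinuousLinearMap.snd ℝ (Fin n → ℝ) (Fin n → ℝ)).hasFDerivAt.comp_hasDerivAt t
      (hx t ht)
  have hdq : EqOn (deriv fun t => (x t).1) (fun t => (x t).2) s := fun t ht => (hq t ht).deriv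
  have hddq : ∀ t ∈ s,
      deriv (deriv fun t => (x t).1) t = acceleration M V μ (x t).1 (x t).2 := fun t ht => by
    rw [(eventuallyEq_of_mem (hs.mem_nhds ht) hdq).deriv_eq]
    exact (hv t ht).deriv
  have hdyn := fun t => acceleration_spec (V := V) (v := (x t).2) hM (hS (x t).1)
  have hconstraint : ∀ t ∈ s, μ (x t).1 *ᵥ (x t).2 = 0 := by
    have hderiv : ∀ t ∈ s, HasDerivAt (fun t => μ (x t).1 *ᵥ (x t).2) 0 t := fun t ht => by
      simpa [(hdyn t).2] using
        hasDerivAt_constraint (hμ.differentiable two_ne_zero) (hq t ht) (hv t ht)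
    intro t ht
    rw [hs.is_const_of_deriv_eq_zero hs'
      (fun t ht => (hderiv t ht).differentiableAt.differentiableWithinAt)
      (fun t ht => (hderiv t ht).deriv) ht ht₀, hx₀, hcons]
  have hF : ContDiff ℝ 1 (vectorField M V μ) := contDiff_vectorField hV hμ hS
  have hxC : ContDiffOn ℝ 2 x s := contDiffOn_succ_of_hasDerivAt_s1 hF hs hx
  refine ⟨contDiff_fst.comp_contDiffOn hxC,
    (contDiff_multiplier (k := 0) (hV.of_le (by norm_num)) (hμ.of_le (by norm_num))
      hS).continuous.comp_continuousOn hxC.continuousOn,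
    fun t ht => ?_, by simp [hx₀], by simp [hdq ht₀, hx₀]⟩
  rw [hddq t ht, hdq ht]
  exact ⟨(hdyn t).1, hconstraint t ht⟩

theorem IsSolution.eq_multiplier_and_hasDerivAt_vectorField {s : Set ℝ} {t₀ : ℝ}
    {q₀ v₀ : Fin n → ℝ} {q : ℝ → Fin n → ℝ} {lam : ℝ → Fin m → ℝ} (hM : IsUnit M.det)
    (hS : ∀ q, IsUnit (constraintGram M μ q).det) (hμ : Differentiable ℝ fun q α i => μ q α i)
    (hs : IsOpen s) (h : IsSolution M V μ s t₀ q₀ v₀ q lam) (t : ℝ) (ht : t ∈ s) :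
    lam t = multiplier M V μ (q t) (deriv q t) ∧
      HasDerivAt (fun t => (q t, deriv q t)) (vectorField M V μ (q t, deriv q t)) t := by
  obtain ⟨hq, -, hdae, -, -⟩ := h
  have hq' : HasDerivAt q (deriv q t) t :=
    ((hq.differentiableOn two_ne_zero).differentiableAt (hs.mem_nhds ht)).hasDerivAt
  have hv' : HasDerivAt (deriv q) (deriv (deriv q) t) t :=
    (((hq.deriv_of_isOpen hs (by norm_num)).differentiableOn one_ne_zero).differentiableAt
      (hs.mem_nhds ht)).hasDerivAt
  have hzero : HasDerivAt (fun s => μ (q s) *ᵥ deriv q s) 0 t :=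
    (hasDerivAt_const t 0).congr_of_eventuallyEq
      (eventually_of_mem (hs.mem_nhds ht) fun s hs => (hdae s hs).2)
  have hacc := (hasDerivAt_constraint hμ hq' hv').unique hzero
  obtain ⟨hlam, hddq⟩ :=
    (dynamics_iff hM (hS (q t))).mp ⟨(hdae t ht).1, eq_neg_of_add_eq_zero_right hacc⟩
  have hx' := hq'.prodMk hv'
  rw [hddq] at hx'
  exact ⟨hlam, hx'⟩

end

end SimpleMechanicalSystem

open SimpleMechanicalSystem

theorem simple_mechanical_dae_existence_uniqueness_general {n m : ℕ}
    (t₀ : ℝ)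
    (M : Matrix (Fin n) (Fin n) ℝ) (hM : M.PosDef)
    (V : (Fin n → ℝ) → ℝ) (hV : ContDiff ℝ (⊤ : ℕ∞) V)
    (μ : (Fin n → ℝ) → Matrix (Fin m) (Fin n) ℝ)
    (hμ : ContDiff ℝ (⊤ : ℕ∞) fun q => fun α i => μ q α i)
    (hrank : ∀ q, (μ q).rank = m)
    (q₀ v₀ : Fin n → ℝ) (hcons : μ q₀ *ᵥ v₀ = 0) :
    ∃ δ > (0 : ℝ), ∃ (q : ℝ → Fin n → ℝ) (lam : ℝ → Fin m → ℝ),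
      (ContDiffOn ℝ 2 q (ball t₀ δ) ∧ ContinuousOn lam (ball t₀ δ) ∧
        (∀ t ∈ ball t₀ δ,
          M *ᵥ deriv (deriv q) t = -gradV V (q t) + (μ (q t))ᵀ *ᵥ lam t ∧
          μ (q t) *ᵥ deriv q t = 0) ∧
        q t₀ = q₀ ∧ deriv q t₀ = v₀) ∧
      (∀ (q' : ℝ → Fin n → ℝ) (lam' : ℝ → Fin m → ℝ),
        (ContDiffOn ℝ 2 q' (ball t₀ δ) ∧ ContinuousOn lam' (ball t₀ δ) ∧
          (∀ t ∈ ball t₀ δ,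
            M *ᵥ deriv (deriv q') t = -gradV V (q' t) + (μ (q' t))ᵀ *ᵥ lam' t ∧
            μ (q' t) *ᵥ deriv q' t = 0) ∧
          q' t₀ = q₀ ∧ deriv q' t₀ = v₀) →
        ∀ t ∈ ball t₀ δ, q' t = q t ∧ lam' t = lam t) := by
  have hMu : IsUnit M.det := (isUnit_iff_isUnit_det M).mp hM.isUnit
  have hS := isUnit_det_constraintGram M μ hM hrank
  have hV2 : ContDiff ℝ 2 V := hV.of_le (WithTop.coe_le_coe.mpr le_top)
  have hμ2 : ContDiff ℝ 2 fun q α i => μ q α i := hμ.of_le (WithTop.coe_le_coe.mpr le_top)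
  have hF : ContDiff ℝ 1 (vectorField M V μ) := contDiff_vectorField hV2 hμ2 hS
  obtain ⟨x, hx₀, ε, hε, hx⟩ :=
    hF.contDiffAt.exists_forall_mem_closedBall_exists_eq_forall_mem_Ioo_hasDerivAt₀
      (x₀ := (q₀, v₀)) t₀
  rw [← Real.ball_eq_Ioo] at hx
  have hball := (convex_ball t₀ ε).isPreconnected
  refine ⟨ε, hε, _, _, isSolution_of_hasDerivAt_vectorField hMu hS hV2 hμ2 isOpen_ball hball
    (mem_ball_self hε) hcons hx hx₀, fun q' lam' h' t ht => ?_⟩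
  have hsol := IsSolution.eq_multiplier_and_hasDerivAt_vectorField hMu hS
    (hμ2.differentiable two_ne_zero) isOpen_ball h'
  have hxx : (q' t, deriv q' t) = x t :=
    ODE_solution_eqOn_of_locallyLipschitz hF.locallyLipschitz isOpen_ball hball
      (fun t ht => (hsol t ht).2) hx (mem_ball_self hε) (by rw [h'.2.2.2.1, h'.2.2.2.2, hx₀]) ht
  exact ⟨congrArg Prod.fst hxx, by rw [(hsol t ht).1, ← hxx]⟩

/-- Local existence and uniqueness of solutions `(q(t), λ(t))` of the nonholonomic DAE
`M q̈ = -∇V(q) + μ(q)ᵀλ`, `μ(q)q̇ = 0` of a simple mechanical system, for initial data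
satisfying the constraint `μ(q₀)v₀ = 0`. -/
theorem simple_mechanical_dae_existence_uniqueness {n m : ℕ}
    (hn : 1 ≤ n) (hm1 : 1 ≤ m) (hmn : m ≤ n) (t₀ : ℝ)
    (M : Matrix (Fin n) (Fin n) ℝ) (hM : M.PosDef)
    (V : (Fin n → ℝ) → ℝ) (hV : ContDiff ℝ (⊤ : ℕ∞) V)
    (μ : (Fin n → ℝ) → Matrix (Fin m) (Fin n) ℝ)
    (hμ : ContDiff ℝ (⊤ : ℕ∞) fun q => fun α i => μ q α i)
    (hrank : ∀ q, (μ q).rank = m)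
    (q₀ v₀ : Fin n → ℝ) (hcons : μ q₀ *ᵥ v₀ = 0) :
    ∃ δ > (0 : ℝ), ∃ (q : ℝ → Fin n → ℝ) (lam : ℝ → Fin m → ℝ),
      (ContDiffOn ℝ 2 q (ball t₀ δ) ∧ ContinuousOn lam (ball t₀ δ) ∧
        (∀ t ∈ ball t₀ δ,
          M *ᵥ deriv (deriv q) t = -gradV V (q t) + (μ (q t))ᵀ *ᵥ lam t ∧
          μ (q t) *ᵥ deriv q t = 0) ∧
        q t₀ = q₀ ∧ deriv q t₀ = v₀) ∧
      (∀ (q' : ℝ → Fin n → ℝ) (lam' : ℝ → Fin m → ℝ),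
        (ContDiffOn ℝ 2 q' (ball t₀ δ) ∧ ContinuousOn lam' (ball t₀ δ) ∧
          (∀ t ∈ ball t₀ δ,
            M *ᵥ deriv (deriv q') t = -gradV V (q' t) + (μ (q' t))ᵀ *ᵥ lam' t ∧
            μ (q' t) *ᵥ deriv q' t = 0) ∧
          q' t₀ = q₀ ∧ deriv q' t₀ = v₀) →
        ∀ t ∈ ball t₀ δ, q' t = q t ∧ lam' t = lam t) :=
  simple_mechanical_dae_existence_uniqueness_general t₀ M hM V hV μ hμ hrank q₀ v₀ hcons
end

section
/- Let L : ℝⁿ×ℝⁿ → ℝ be of class C², let q : ℝ → ℝⁿ be of class C², and fix β ∈ [0,1]. Define the discrete Lagrangian L_d^β(ε) = ε L( (1−β)q(0) + βq(ε), (q(ε)−q(0))/ε ). Then there exist C > 0 and ε₀ > 0 such that for all 0 < ε ≤ ε₀: | L_d^β(ε) − ∫₀^ε L(q(t), q̇(t)) dt | ≤ C ε²; and if β = 1/2 and L and q are of class C³, then | L_d^{1/2}(ε) − ∫₀^ε L(q(t), q̇(t)) dt | ≤ C ε³. -/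
/-!
Write `γ t = (q t, q̇ t)` and `z = ((1 - β) q 0 + β q ε, (q ε - q 0) / ε)`. For `t ∈ [0, ε]` the
point `z` is within `O(ε)` of `γ t`, by the mean value inequality for `q` and `q̇`, and all these
points stay in a fixed compact ball on which `L` is Lipschitz; integrating
`L z - L (γ t)` over `[0, ε]` gives the `ε²` bound.

For `β = 1/2`, expand `L` to first order at `z`. The quadratic remainder contributes
`O(ε²) · ε`, and the linear term integrates to `DL(z) (ε z - ∫₀^ε γ)`. The velocity component of
`ε z - ∫₀^ε γ` vanishes exactly, and its position component is the error of the trapezoidal rule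
for `q`, which is `O(ε³)`.
-/

open intervalIntegral

open Set MeasureTheory

section

variable {E F G : Type*} [NormedAddCommGroup E] [NormedSpace ℝ E]
  [NormedAddCommGroup F] [NormedSpace ℝ F] [NormedAddCommGroup G] [NormedSpace ℝ G]

theorem norm_sub_sub_smul_le_of_norm_deriv_sub_le {f f' : ℝ → E} {v : E} {a b C : ℝ}
    (hab : a ≤ b) (hf : ∀ s ∈ Icc a b, HasDerivWithinAt f (f' s) (Icc a b) s)
    (bound : ∀ s ∈ Icc a b, ‖f' s - v‖ ≤ C) :
    ‖f b - f a - (b - a) • v‖ ≤ C * (b - a) := by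
  have hg : ∀ s ∈ Icc a b,
      HasDerivWithinAt (fun s => f s - s • v) (f' s - v) (Icc a b) s := fun s hs => by
    simpa using (hf s hs).fun_sub ((hasDerivWithinAt_id s _).smul_const v)
  have := (convex_Icc a b).norm_image_sub_le_of_norm_hasDerivWithin_le hg bound
    (left_mem_Icc.2 hab) (right_mem_Icc.2 hab)
  rw [Real.norm_eq_abs, abs_of_nonneg (sub_nonneg.2 hab)] at this
  convert this using 2
  module

theorem norm_slope_sub_deriv_le {q : ℝ → E} {a b t K : ℝ} (hab : a < b) (ht : t ∈ Icc a b)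
    (hq : Differentiable ℝ q) (hq' : Differentiable ℝ (deriv q))
    (hK : ∀ s ∈ Icc a b, ‖deriv (deriv q) s‖ ≤ K) :
    ‖slope q a b - deriv q t‖ ≤ K * (b - a) := by
  have hdist : ∀ s ∈ Icc a b, ‖deriv q s - deriv q t‖ ≤ K * (b - a) := fun s hs =>
    calc ‖deriv q s - deriv q t‖ ≤ K * ‖s - t‖ :=
          (convex_Icc a b).norm_image_sub_le_of_norm_hasDerivWithin_le
            (fun x _ => (hq' x).hasDerivAt.hasDerivWithinAt) hK ht hs
      _ ≤ K * (b - a) := by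
          have hK0 : 0 ≤ K := (norm_nonneg _).trans (hK t ht)
          gcongr
          rw [Real.norm_eq_abs, abs_sub_le_iff]
          constructor <;> linarith [hs.1, hs.2, ht.1, ht.2]
  have hmv := norm_sub_sub_smul_le_of_norm_deriv_sub_le hab.le
    (fun s _ => (hq s).hasDerivAt.hasDerivWithinAt) hdist
  have hba : 0 < b - a := sub_pos.2 hab
  calc ‖slope q a b - deriv q t‖ = (b - a)⁻¹ * ‖q b - q a - (b - a) • deriv q t‖ := by
        rw [slope_def_module, ← norm_smul_of_nonneg (inv_nonneg.2 hba.le),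
          smul_sub _ _ ((b - a) • _), smul_smul, inv_mul_cancel₀ hba.ne', one_smul]
    _ ≤ (b - a)⁻¹ * (K * (b - a) * (b - a)) := by gcongr
    _ = K * (b - a) := by field_simp

theorem norm_trapezoid_sub_integral_le [CompleteSpace E] {q : ℝ → E} {a b K : ℝ} (hab : a ≤ b)
    (hq : Differentiable ℝ q) (hq' : Differentiable ℝ (deriv q))
    (hK : ∀ s ∈ Icc a b, ‖deriv (deriv q) s‖ ≤ K) :
    ‖((b - a) / 2) • (q a + q b) - ∫ t in a..b, q t‖ ≤ K / 2 * (b - a) ^ 3 := by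
  have hK0 : 0 ≤ K := (norm_nonneg _).trans (hK a (left_mem_Icc.2 hab))
  -- `U` is the trapezoid error on `[a, u]`; `U a = U' a = 0` and `U'' u = ((u - a) / 2) • q'' u`.
  set U : ℝ → E := fun u => ((u - a) / 2) • (q a + q u) - ∫ t in a..u, q t
  set U' : ℝ → E := fun u => (1 / 2 : ℝ) • (q a - q u) + ((u - a) / 2) • deriv q u
  have hU : ∀ u, HasDerivAt U (U' u) u := fun u => by
    have := ((((hasDerivAt_id u).sub_const a).div_const 2).smul
      ((hq u).hasDerivAt.const_add (q a))).sub
        (hq.continuous.integral_hasStrictDerivAt a u).hasDerivAt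
    exact this.congr_deriv (by simp only [U', id]; module)
  have hU' : ∀ u, HasDerivAt U' (((u - a) / 2) • deriv (deriv q) u) u := fun u => by
    have := (((hq u).hasDerivAt.const_sub (q a)).const_smul (1 / 2 : ℝ)).add
      ((((hasDerivAt_id u).sub_const a).div_const 2).smul (hq' u).hasDerivAt)
    exact this.congr_deriv (by simp only [id]; module)
  have hU'bound : ∀ u ∈ Icc a b, ‖U' u‖ ≤ K / 2 * (b - a) ^ 2 := fun u hu => by
    have := norm_image_sub_le_of_norm_deriv_le_segment' (C := K / 2 * (b - a))
      (fun x _ => (hU' x).hasDerivWithinAt) (fun x hx => ?_) u hu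
    · simp only [U', sub_self, smul_zero, zero_div, zero_smul, add_zero, sub_zero] at this
      refine this.trans ?_
      rw [sq, ← mul_assoc]
      gcongr
      linarith [hu.2]
    · rw [norm_smul, Real.norm_of_nonneg (by linarith [hx.1])]
      calc (x - a) / 2 * ‖deriv (deriv q) x‖ ≤ (b - a) / 2 * K :=
            mul_le_mul (by linarith [hx.2]) (hK x (Ico_subset_Icc_self hx)) (norm_nonneg _)
              (by linarith)
        _ = K / 2 * (b - a) := by ring
  have := norm_image_sub_le_of_norm_deriv_le_segment'
    (fun x _ => (hU x).hasDerivWithinAt) (fun x hx => hU'bound x (Ico_subset_Icc_self hx))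
    b (right_mem_Icc.2 hab)
  simp only [U, sub_self, zero_div, zero_smul, integral_same, sub_zero] at this
  rwa [pow_succ, ← mul_assoc]

theorem Convex.norm_image_sub_sub_fderiv_le {f : E → F} {s : Set E} (hs : Convex ℝ s) {M : ℝ}
    (hM : 0 ≤ M) (hf : ∀ x ∈ s, DifferentiableAt ℝ f x)
    (hf' : ∀ x ∈ s, ∀ y ∈ s, ‖fderiv ℝ f y - fderiv ℝ f x‖ ≤ M * ‖y - x‖)
    {x y : E} (hx : x ∈ s) (hy : y ∈ s) :
    ‖f y - f x - fderiv ℝ f x (y - x)‖ ≤ M * ‖y - x‖ ^ 2 := by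
  have hseg : segment ℝ x y ⊆ s := hs.segment_subset hx hy
  have bound : ∀ w ∈ segment ℝ x y, ‖fderiv ℝ f w - fderiv ℝ f x‖ ≤ M * ‖y - x‖ := fun w hw => by
    refine (hf' x hx w (hseg hw)).trans (mul_le_mul_of_nonneg_left ?_ hM)
    have := segment_subset_closedBall_left x y hw
    rwa [Metric.mem_closedBall, dist_eq_norm, dist_eq_norm, norm_sub_rev x] at this
  have := (convex_segment x y).norm_image_sub_le_of_norm_hasFDerivWithin_le'
    (fun w hw => (hf w (hseg hw)).hasFDerivAt.hasFDerivWithinAt) bound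
    (left_mem_segment ℝ x y) (right_mem_segment ℝ x y)
  rwa [mul_assoc, ← sq] at this

theorem ContDiff.exists_bound_fderiv_and_taylor_of_isCompact {f : E → F} (hf : ContDiff ℝ 2 f)
    {s : Set E} (hs : IsCompact s) (hsc : Convex ℝ s) :
    ∃ Λ M : ℝ, 0 ≤ M ∧ (∀ x ∈ s, ‖fderiv ℝ f x‖ ≤ Λ) ∧
      ∀ x ∈ s, ∀ y ∈ s, ‖f y - f x - fderiv ℝ f x (y - x)‖ ≤ M * ‖y - x‖ ^ 2 := by
  have hf' : ContDiff ℝ 1 (fderiv ℝ f) := hf.fderiv_right (by norm_num)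
  obtain ⟨Λ, hΛ⟩ :=
    hs.exists_bound_of_continuousOn (hf.continuous_fderiv (by norm_num)).continuousOn
  obtain ⟨M, hM⟩ :=
    hs.exists_bound_of_continuousOn (hf'.continuous_fderiv one_ne_zero).continuousOn
  refine ⟨Λ, max M 0, le_max_right _ _, hΛ, fun x hx y hy => ?_⟩
  refine hsc.norm_image_sub_sub_fderiv_le (le_max_right _ _)
    (fun z _ => (hf.differentiable (by norm_num)).differentiableAt) (fun x hx y hy => ?_) hx hy
  exact hsc.norm_image_sub_le_of_norm_fderiv_le
    (fun z _ => (hf'.differentiable one_ne_zero).differentiableAt)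
    (fun z hz => (hM z hz).trans (le_max_left _ _)) hx hy

theorem norm_smul_sub_integral_le [CompleteSpace G] {f : ℝ → G} {y : G} {a b C : ℝ}
    (hab : a ≤ b) (hf : IntervalIntegrable f volume a b) (h : ∀ t ∈ Ioc a b, ‖y - f t‖ ≤ C) :
    ‖(b - a) • y - ∫ t in a..b, f t‖ ≤ C * (b - a) := by
  rw [← intervalIntegral.integral_const,
    ← intervalIntegral.integral_sub intervalIntegrable_const hf]
  have := norm_integral_le_of_norm_le_const (fun t ht => h t (uIoc_of_le hab ▸ ht))
  rwa [abs_of_nonneg (sub_nonneg.2 hab)] at this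

theorem norm_smul_sub_integral_comp_le [CompleteSpace F] [CompleteSpace G] (D : F →L[ℝ] G)
    {L : F → G} {γ : ℝ → F} {z : F} {a b ρ : ℝ} (hab : a ≤ b)
    (hγ : IntervalIntegrable γ volume a b) (hLγ : IntervalIntegrable (fun t => L (γ t)) volume a b)
    (h : ∀ t ∈ Ioc a b, ‖L (γ t) - L z - D (γ t - z)‖ ≤ ρ) :
    ‖(b - a) • L z - ∫ t in a..b, L (γ t)‖ ≤
      ‖D‖ * ‖(b - a) • z - ∫ t in a..b, γ t‖ + ρ * (b - a) := by
  have hDγ : IntervalIntegrable (fun t => D (γ t)) volume a b :=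
    ⟨D.integrable_comp hγ.1, D.integrable_comp hγ.2⟩
  have hsplit : (b - a) • L z - ∫ t in a..b, L (γ t) = D ((b - a) • z - ∫ t in a..b, γ t) +
      ((b - a) • (L z - D z) - ∫ t in a..b, (L (γ t) - D (γ t))) := by
    rw [intervalIntegral.integral_sub hLγ hDγ, D.intervalIntegral_comp_comm hγ]
    simp only [map_sub, map_smul, smul_sub]
    abel
  rw [hsplit]
  refine (norm_add_le _ _).trans (add_le_add (D.le_opNorm _) ?_)
  refine norm_smul_sub_integral_le hab (hLγ.sub hDγ) fun t ht => ?_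
  calc ‖L z - D z - (L (γ t) - D (γ t))‖ = ‖L (γ t) - L z - D (γ t - z)‖ := by
        rw [← norm_neg, map_sub]; congr 1; abel
    _ ≤ ρ := h t ht

theorem intervalIntegral.integral_prodMk [CompleteSpace E] [CompleteSpace F] {f : ℝ → E} {g : ℝ → F}
    {a b : ℝ} (hf : IntervalIntegrable f volume a b) (hg : IntervalIntegrable g volume a b) :
    ∫ t in a..b, (f t, g t) = (∫ t in a..b, f t, ∫ t in a..b, g t) := by
  simp only [intervalIntegral, integral_pair hf.1 hg.1, integral_pair hf.2 hg.2, Prod.mk_sub_mk]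

/-- The finite difference map `ρ^β(x₀, x₁)` of the paper, at step size `ε`. -/
noncomputable def finiteDifferenceMap (β ε : ℝ) (x₀ x₁ : E) : E × E :=
  ((1 - β) • x₀ + β • x₁, ε⁻¹ • (x₁ - x₀))

theorem norm_finiteDifferenceMap_sub_le {q : ℝ → E} {β ε t A K : ℝ} (hβ : β ∈ Icc (0 : ℝ) 1)
    (hε : 0 < ε) (ht : t ∈ Icc 0 ε) (hq : Differentiable ℝ q) (hq' : Differentiable ℝ (deriv q))
    (hA : ∀ s ∈ Icc 0 ε, ‖deriv q s‖ ≤ A) (hK : ∀ s ∈ Icc 0 ε, ‖deriv (deriv q) s‖ ≤ K) :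
    ‖finiteDifferenceMap β ε (q 0) (q ε) - (q t, deriv q t)‖ ≤ max A K * ε := by
  rw [finiteDifferenceMap, Prod.mk_sub_mk, norm_prod_le_iff]
  constructor
  · have hball : ∀ s ∈ Icc 0 ε, q s ∈ Metric.closedBall (q t) (A * ε) := fun s hs => by
      rw [mem_closedBall_iff_norm]
      calc ‖q s - q t‖ ≤ A * ‖s - t‖ :=
            (convex_Icc 0 ε).norm_image_sub_le_of_norm_hasDerivWithin_le
              (fun x _ => (hq x).hasDerivAt.hasDerivWithinAt) hA ht hs
        _ ≤ A * ε := by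
            have hA0 : 0 ≤ A := (norm_nonneg _).trans (hA t ht)
            gcongr
            rw [Real.norm_eq_abs, abs_sub_le_iff]
            constructor <;> linarith [hs.1, hs.2, ht.1, ht.2]
    have := convex_closedBall (q t) (A * ε) (hball 0 (left_mem_Icc.2 hε.le))
      (hball ε (right_mem_Icc.2 hε.le)) (sub_nonneg.2 hβ.2) hβ.1 (sub_add_cancel 1 β)
    rw [mem_closedBall_iff_norm] at this
    exact this.trans (by gcongr; exact le_max_left A K)
  · have := norm_slope_sub_deriv_le hε ht hq hq' hK
    rw [slope_def_module, sub_zero] at this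
    exact this.trans (by gcongr; exact le_max_right A K)

theorem ContDiff.exists_norm_finiteDifferenceMap_sub_le {q : ℝ → E} (hq : ContDiff ℝ 2 q)
    {β : ℝ} (hβ : β ∈ Icc (0 : ℝ) 1) :
    ∃ c ≥ 0, ∀ ε ∈ Ioc (0 : ℝ) 1, ∀ t ∈ Icc 0 ε,
      ‖finiteDifferenceMap β ε (q 0) (q ε) - (q t, deriv q t)‖ ≤ c * ε := by
  have hq' : ContDiff ℝ 1 (deriv q) := hq.deriv'
  obtain ⟨A, hA⟩ := isCompact_Icc.exists_bound_of_continuousOn hq'.continuous.continuousOn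
  obtain ⟨K, hK⟩ := isCompact_Icc.exists_bound_of_continuousOn
    (hq'.continuous_deriv le_rfl).continuousOn
  refine ⟨max A K, le_max_of_le_right ((norm_nonneg _).trans (hK 0 ⟨le_rfl, zero_le_one⟩)),
    fun ε hε t ht => norm_finiteDifferenceMap_sub_le hβ hε.1 ht
      (hq.differentiable (by norm_num)) (hq'.differentiable one_ne_zero) (fun s hs => ?_)
      (fun s hs => ?_)⟩
  · exact hA s ⟨hs.1, hs.2.trans hε.2⟩
  · exact hK s ⟨hs.1, hs.2.trans hε.2⟩

theorem ContDiff.exists_norm_smul_finiteDifferenceMap_half_sub_integral_le [CompleteSpace E]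
    {q : ℝ → E} (hq : ContDiff ℝ 2 q) :
    ∃ K ≥ 0, ∀ ε ∈ Ioc (0 : ℝ) 1,
      ‖ε • finiteDifferenceMap (1 / 2) ε (q 0) (q ε) - ∫ t in (0 : ℝ)..ε, (q t, deriv q t)‖ ≤
        K * ε ^ 3 := by
  have hq₁ : Differentiable ℝ q := hq.differentiable (by norm_num)
  have hq' : ContDiff ℝ 1 (deriv q) := hq.deriv'
  obtain ⟨K, hK⟩ := isCompact_Icc.exists_bound_of_continuousOn
    (hq'.continuous_deriv le_rfl).continuousOn
  refine ⟨K / 2, by linarith [(norm_nonneg _).trans (hK 0 ⟨le_rfl, zero_le_one⟩)],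
    fun ε hε => ?_⟩
  have hvel : ε • ε⁻¹ • (q ε - q 0) = q ε - q 0 := by
    rw [smul_smul, mul_inv_cancel₀ hε.1.ne', one_smul]
  have hpos : ε • ((1 - 1 / 2 : ℝ) • q 0 + (1 / 2 : ℝ) • q ε) = ((ε - 0) / 2) • (q 0 + q ε) := by
    module
  rw [intervalIntegral.integral_prodMk (hq.continuous.intervalIntegrable _ _)
      (hq'.continuous.intervalIntegrable _ _),
    integral_deriv_eq_sub (fun x _ => hq₁ x) (hq'.continuous.intervalIntegrable _ _)]
  simp only [finiteDifferenceMap, Prod.smul_mk, Prod.mk_sub_mk, hvel, hpos, sub_self,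
    Prod.norm_mk, norm_zero, max_eq_left (norm_nonneg _)]
  simpa only [sub_zero] using norm_trapezoid_sub_integral_le hε.1.le hq₁
    (hq'.differentiable one_ne_zero) (fun s hs => hK s ⟨hs.1, hs.2.trans hε.2⟩)

theorem ContDiff.exists_norm_smul_sub_integral_comp_le [ProperSpace F] [CompleteSpace G]
    {L : F → G} (hL : ContDiff ℝ 2 L) {γ z : ℝ → F} (hγ : Continuous γ) {c : ℝ} (hc : 0 ≤ c)
    (hgap : ∀ ε ∈ Ioc (0 : ℝ) 1, ∀ t ∈ Icc 0 ε, ‖z ε - γ t‖ ≤ c * ε) :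
    ∃ Λ ≥ 0, ∃ M ≥ 0, ∀ ε ∈ Ioc (0 : ℝ) 1,
      ‖ε • L (z ε) - ∫ t in (0 : ℝ)..ε, L (γ t)‖ ≤ Λ * c * ε ^ 2 ∧
      ‖ε • L (z ε) - ∫ t in (0 : ℝ)..ε, L (γ t)‖ ≤
        Λ * ‖ε • z ε - ∫ t in (0 : ℝ)..ε, γ t‖ + M * c ^ 2 * ε ^ 3 := by
  set B := Metric.closedBall (γ 0) (2 * c)
  have hzB : ∀ ε ∈ Ioc (0 : ℝ) 1, z ε ∈ B := fun ε hε => by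
    rw [mem_closedBall_iff_norm]
    nlinarith [hgap ε hε 0 (left_mem_Icc.2 hε.1.le), hε.2]
  have hγB : ∀ ε ∈ Ioc (0 : ℝ) 1, ∀ t ∈ Icc 0 ε, γ t ∈ B := fun ε hε t ht => by
    rw [mem_closedBall_iff_norm]
    calc ‖γ t - γ 0‖ ≤ ‖z ε - γ t‖ + ‖z ε - γ 0‖ := by
          rw [norm_sub_rev (z ε) (γ t)]; exact norm_sub_le_norm_sub_add_norm_sub _ _ _
      _ ≤ c * ε + c * ε := add_le_add (hgap ε hε t ht) (hgap ε hε 0 (left_mem_Icc.2 hε.1.le))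
      _ ≤ 2 * c := by nlinarith [hε.2]
  obtain ⟨Λ, M, hM, hΛ, hTaylor⟩ :=
    hL.exists_bound_fderiv_and_taylor_of_isCompact (isCompact_closedBall (γ 0) (2 * c))
      (convex_closedBall _ _)
  have hΛ0 : 0 ≤ Λ := (norm_nonneg _).trans (hΛ _ (Metric.mem_closedBall_self (by positivity)))
  refine ⟨Λ, hΛ0, M, hM, fun ε hε => ⟨?_, ?_⟩⟩
  · have := norm_smul_sub_integral_le (f := fun t => L (γ t)) (C := Λ * (c * ε)) hε.1.le
      ((hL.continuous.comp hγ).intervalIntegrable 0 ε) fun t ht =>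
      ((convex_closedBall _ _).norm_image_sub_le_of_norm_fderiv_le
        (fun x _ => (hL.differentiable (by norm_num)).differentiableAt) hΛ
        (hγB ε hε t (Ioc_subset_Icc_self ht)) (hzB ε hε)).trans
      (by gcongr; exact hgap ε hε t (Ioc_subset_Icc_self ht))
    rw [sub_zero] at this
    exact this.trans_eq (by ring)
  · have := norm_smul_sub_integral_comp_le (fderiv ℝ L (z ε)) (ρ := M * (c * ε) ^ 2) hε.1.le
      (hγ.intervalIntegrable _ _) ((hL.continuous.comp hγ).intervalIntegrable 0 ε) fun t ht =>
      (hTaylor _ (hzB ε hε) _ (hγB ε hε t (Ioc_subset_Icc_self ht))).trans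
      (by gcongr; rw [norm_sub_rev]; exact hgap ε hε t (Ioc_subset_Icc_self ht))
    rw [sub_zero] at this
    calc _ ≤ _ := this
      _ ≤ Λ * ‖ε • z ε - ∫ t in (0 : ℝ)..ε, γ t‖ + M * (c * ε) ^ 2 * ε := by
          gcongr; exact hΛ _ (hzB ε hε)
      _ = _ := by ring

end

/-- Consistency order of the discrete Lagrangian
`L_d^β(ε) = ε L((1-β)q(0) + βq(ε), (q(ε)-q(0))/ε)` with respect to the exact action
integral: order `ε²` for general `β ∈ [0,1]`, and order `ε³` for `β = 1/2` when `L` and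
`q` are `C³`. -/
theorem discrete_lagrangian_consistency {n : ℕ}
    (L : (Fin n → ℝ) × (Fin n → ℝ) → ℝ) (hL : ContDiff ℝ 2 L)
    (q : ℝ → Fin n → ℝ) (hq : ContDiff ℝ 2 q)
    (β : ℝ) (hβ : β ∈ Set.Icc (0 : ℝ) 1) :
    ∃ C > (0 : ℝ), ∃ ε₀ > (0 : ℝ),
      (∀ ε : ℝ, 0 < ε → ε ≤ ε₀ →
        |ε * L ((1 - β) • q 0 + β • q ε, ε⁻¹ • (q ε - q 0)) -
            ∫ t in (0 : ℝ)..ε, L (q t, deriv q t)| ≤ C * ε ^ 2) ∧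
      (β = 1 / 2 → ContDiff ℝ 3 L → ContDiff ℝ 3 q →
        ∀ ε : ℝ, 0 < ε → ε ≤ ε₀ →
          |ε * L ((1 - β) • q 0 + β • q ε, ε⁻¹ • (q ε - q 0)) -
              ∫ t in (0 : ℝ)..ε, L (q t, deriv q t)| ≤ C * ε ^ 3) := by
  obtain ⟨c, hc, hgap⟩ := hq.exists_norm_finiteDifferenceMap_sub_le hβ
  obtain ⟨K, hK, htrap⟩ := hq.exists_norm_smul_finiteDifferenceMap_half_sub_integral_le
  obtain ⟨Λ, hΛ, M, hM, hbound⟩ := hL.exists_norm_smul_sub_integral_comp_le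
    (hq.continuous.prodMk (hq.continuous_deriv (by norm_num))) hc hgap
  have hC : 0 ≤ Λ * K + M * c ^ 2 := by positivity
  refine ⟨Λ * c + (Λ * K + M * c ^ 2) + 1, by positivity, 1, one_pos, fun ε hε hε1 => ?_, ?_⟩
  · calc _ ≤ Λ * c * ε ^ 2 := (hbound ε ⟨hε, hε1⟩).1
      _ ≤ _ := by gcongr; linarith
  · rintro rfl - - ε hε hε1
    calc _ ≤ Λ * ‖ε • finiteDifferenceMap (1 / 2) ε (q 0) (q ε) -
            ∫ t in (0 : ℝ)..ε, (q t, deriv q t)‖ + M * c ^ 2 * ε ^ 3 := (hbound ε ⟨hε, hε1⟩).2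
      _ ≤ Λ * (K * ε ^ 3) + M * c ^ 2 * ε ^ 3 := by gcongr; exact htrap ε ⟨hε, hε1⟩
      _ = (Λ * K + M * c ^ 2) * ε ^ 3 := by ring
      _ ≤ _ := mul_le_mul_of_nonneg_right (by linarith [mul_nonneg hΛ hc]) (by positivity)
end

section
/- Consider the nonholonomic particle with constraint v_z − y v_x = 0 and one step of the explicit midpoint-type velocity integrator: given (x,y,z,v_x,v_y,v_z) ∈ ℝ⁶ with v_z = y v_x, and ε > 0, set λ = v_x v_y / (1 + (y + ε v_y)(y + (ε/2) v_y)); v_x' = v_x − ε λ (y + (ε/2)v_y); v_y' = v_y; v_z' = v_z + ε λ; y' = y + ε v_y'. Then v_z' − y' v_x' = 0, provided 1 + (y + ε v_y)(y + (ε/2) v_y) ≠ 0. That is, the integrator with redefined nodes exactly preserves the nonholonomic constraint distribution D^{np} = {v_z = y v_x}. -/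
/-- One step of the explicit midpoint-type velocity integrator for the nonholonomic
particle (with redefined nodes) exactly preserves the constraint `v_z = y * v_x`. -/
theorem nonholonomic_particle_midpoint_preserves_constraint
    (x y z vx vy vz ε : ℝ) (hε : 0 < ε)
    (hcons : vz = y * vx)
    (hden : 1 + (y + ε * vy) * (y + ε / 2 * vy) ≠ 0) :
    (vz + ε * (vx * vy / (1 + (y + ε * vy) * (y + ε / 2 * vy)))) -
      (y + ε * vy) *
        (vx - ε * (vx * vy / (1 + (y + ε * vy) * (y + ε / 2 * vy))) * (y + ε / 2 * vy))
      = 0 := by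
  subst hcons
  obtain ⟨L, hL⟩ : ∃ L, vx * vy / (1 + (y + ε * vy) * (y + ε / 2 * vy)) = L := ⟨_, rfl⟩
  have hLe : L * (1 + (y + ε * vy) * (y + ε / 2 * vy)) = vx * vy := by
    rw [← hL, div_mul_cancel₀ _ hden]
  rw [hL]
  linear_combination ε * hLe
end

section
/- Consider the nonholonomic particle and the following one-step map on the original nodes: given (x,y,z,v_x,v_y,v_z) ∈ ℝ⁶ satisfying the deformed constraint v_z − y v_x + (ε/2) v_x v_y = 0, and ε > 0, set λ = v_y v_x / (1 + y(y + (ε/2) v_y)); v_x' = v_x − ε λ y; v_y' = v_y; v_z' = v_z + ε λ; y' = y + ε v_y'. Then v_z' − y' v_x' + (ε/2) v_x' v_y' = 0, provided 1 + y(y + (ε/2)v_y) ≠ 0. That is, the midpoint-type nonholonomic integrator at the original nodes exactly preserves the ε-deformed constraint submanifold D_ε^{np} = {v_z − y v_x + (ε/2) v_x v_y = 0}. -/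
/-- One step of the midpoint-type nonholonomic integrator for the nonholonomic particle,
written at the original nodes, exactly preserves the ε-deformed constraint
`v_z - y v_x + (ε/2) v_x v_y = 0`. -/
theorem nonholonomic_particle_deformed_constraint_preserved
    (x y z vx vy vz ε : ℝ) (hε : 0 < ε)
    (hcons : vz - y * vx + ε / 2 * (vx * vy) = 0)
    (hden : 1 + y * (y + ε / 2 * vy) ≠ 0) :
    (vz + ε * (vy * vx / (1 + y * (y + ε / 2 * vy)))) -
        (y + ε * vy) * (vx - ε * (vy * vx / (1 + y * (y + ε / 2 * vy))) * y) +
        ε / 2 * ((vx - ε * (vy * vx / (1 + y * (y + ε / 2 * vy))) * y) * vy)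
      = 0 := by
  set l := vy * vx / (1 + y * (y + ε / 2 * vy)) with hl
  have hld : l * (1 + y * (y + ε / 2 * vy)) = vy * vx := by
    rw [hl, div_mul_cancel₀ _ hden]
  linear_combination hcons + ε * hld
end

section
/- Consider the nonholonomic particle and the following one-step map: given (x,y,z,v_x,v_y,v_z) ∈ ℝ⁶ with v_z = y v_x, and ε > 0, set λ = v_y v_x / (1 + y(y + ε v_y)); v_x' = v_x − ε λ y; v_y' = v_y; v_z' = v_z + ε λ; y' = y + ε v_y'. Then v_z' − y' v_x' = 0, provided 1 + y(y + ε v_y) ≠ 0. That is, the velocity nonholonomic integrator generated by the finite difference map ρ(q_k,q_{k+1}) = (q_{k+1}, (q_{k+1}−q_k)/ε) exactly preserves the nonholonomic constraint distribution D^{np} = {v_z = y v_x} without any redefinition of the nodes. -/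
/-- One step of the velocity nonholonomic integrator for the nonholonomic particle
generated by the finite difference map `ρ(q_k, q_{k+1}) = (q_{k+1}, (q_{k+1} - q_k)/ε)`
exactly preserves the constraint `v_z = y * v_x` without redefining the nodes. -/
theorem nonholonomic_particle_right_node_preserves_constraint
    (x y z vx vy vz ε : ℝ) (hε : 0 < ε)
    (hcons : vz = y * vx)
    (hden : 1 + y * (y + ε * vy) ≠ 0) :
    (vz + ε * (vy * vx / (1 + y * (y + ε * vy)))) -
        (y + ε * vy) * (vx - ε * (vy * vx / (1 + y * (y + ε * vy))) * y)
      = 0 := by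
  subst hcons; field_simp; ring
end
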